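/- Let I ⊆ S, put N_I = {w ∈ W : w·Π_I = Π_I} and Ỹ_I = {w ∈ N_I : w·(Φ^{⊥I} ∩ Φ⁺) = Φ^{⊥I} ∩ Φ⁺}. Then N_I = W^{⊥I} ⋊ Ỹ_I, and the normalizer N_W(W_I) of W_I in W decomposes as N_W(W_I) = W_I ⋊ (W^{⊥I} ⋊ Ỹ_I) = (W_I × W^{⊥I}) ⋊ Ỹ_I; in particular W_I and W^{⊥I} commute elementwise and intersect trivially, W_I·W^{⊥I} is normal in N_W(W_I), (W_I·W^{⊥I}) ∩ Ỹ_I = {1}, and N_W(W_I) = W_I·W^{⊥I}·Ỹ_I. Moreover Ỹ_I acts on W^{⊥I} by automorphisms of the Coxeter system (W^{⊥I},R^I). -/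

import Mathlib

noncomputable section

namespace CoxCentralizer

open Classical

variable {B : Type*} {W : Type*} [Group W] {V : Type*} [AddCommGroup V] [Module ℝ V]

/-- The geometric representation of a Coxeter system `(W, S)` (with `S` indexed by `B`):
a vector space `V` with a linearly independent family of simple roots `α`, a `W`-invariant
symmetric bilinear form determined by the Coxeter matrix, and a faithful action of `W`
for which the simple reflections act by the usual formula. -/
structure GeomRep (M : CoxeterMatrix B) (cs : CoxeterSystem M W)
    (V : Type*) [AddCommGroup V] [Module ℝ V] : Type _ where
  α : B → V
  indep : LinearIndependent ℝ α
  spans : ⊤ ≤ Submodule.span ℝ (Set.range α)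
  form : V →ₗ[ℝ] V →ₗ[ℝ] ℝ
  symm : ∀ u v : V, form u v = form v u
  ρ : W →* (V ≃ₗ[ℝ] V)
  faithful : Function.Injective ρ
  invariant : ∀ (w : W) (u v : V), form (ρ w u) (ρ w v) = form u v
  form_simple_fin : ∀ i j : B, M i j ≠ 0 →
    form (α i) (α j) = - Real.cos (Real.pi / (M i j : ℝ))
  form_simple_inf : ∀ i j : B, M i j = 0 → form (α i) (α j) = -1
  simple_act : ∀ (i : B) (v : V), ρ (cs.simple i) v = v - (2 * form (α i) v) • α i

variable {M : CoxeterMatrix B} {cs : CoxeterSystem M W}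

namespace GeomRep

variable (G : GeomRep M cs V)

/-- The root system `Φ = W · Π`. -/
def Phi : Set V := {v | ∃ (w : W) (i : B), G.ρ w (G.α i) = v}

/-- The set `Π` of simple roots. -/
def Pi0 : Set V := Set.range G.α

/-- The positive roots: roots that are nonnegative linear combinations of simple roots. -/
def PhiPos : Set V :=
  {v ∈ G.Phi | ∃ c : B →₀ ℝ, (∀ i, 0 ≤ c i) ∧ v = c.sum fun i r => r • G.α i}

/-- The negative roots `Φ⁻ = -Φ⁺`. -/
def PhiNeg : Set V := {v | -v ∈ G.PhiPos}

/-- The reflection `s_γ = w s w⁻¹` along a root `γ = w · α_s`. -/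
def reflAlong (γ : V) : W :=
  if h : γ ∈ G.Phi then h.choose * cs.simple h.choose_spec.choose * h.choose⁻¹ else 1

/-- `Ψ[w] = {γ ∈ Ψ ∩ Φ⁺ : w · γ ∈ Φ⁻}`. -/
def inver (Ψ : Set V) (w : W) : Set V := {γ ∈ Ψ ∩ G.PhiPos | G.ρ w γ ∈ G.PhiNeg}

/-- `W(Ψ)`: the reflection subgroup generated by the reflections along the roots in `Ψ`. -/
def WR (Ψ : Set V) : Subgroup W := Subgroup.closure (G.reflAlong '' Ψ)

/-- The set `H · A` for a subgroup `H ≤ W` and a set `A ⊆ V`. -/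
def act (H : Subgroup W) (A : Set V) : Set V := {v | ∃ w ∈ H, ∃ a ∈ A, G.ρ w a = v}

/-- The orbit `W(Ψ) · Ψ`. -/
def orbit (Ψ : Set V) : Set V := G.act (G.WR Ψ) Ψ

/-- `Π(Ψ)`: the simple system of the reflection subgroup `W(Ψ)`; the roots
`γ ∈ (W(Ψ)·Ψ) ∩ Φ⁺` such that in every expression of `γ` as a positive linear combination
of roots in `(W(Ψ)·Ψ) ∩ Φ⁺`, all the roots involved equal `γ`. -/
def simpleSet (Ψ : Set V) : Set V :=
  {γ ∈ G.orbit Ψ ∩ G.PhiPos |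
    ∀ (n : ℕ) (c : Fin n → ℝ) (β : Fin n → V),
      (∀ k, 0 < c k) → (∀ k, β k ∈ G.orbit Ψ ∩ G.PhiPos) →
      γ = ∑ k, c k • β k → ∀ k, β k = γ}

/-- `S(Ψ) = {s_γ : γ ∈ Π(Ψ)}`, the canonical Coxeter generating set of `W(Ψ)`. -/
def SR (Ψ : Set V) : Set W := G.reflAlong '' G.simpleSet Ψ

/-- `Π_I = {α_s : s ∈ I}`. -/
def PiI (I : Set B) : Set V := G.α '' I

/-- `Φ_J = Φ ∩ span(Π_J)`. -/
def PhiIn (J : Set B) : Set V := G.Phi ∩ (Submodule.span ℝ (G.PiI J) : Set V)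

/-- `Φ_J^{⊥I}`: the roots of `Φ_J` orthogonal to all simple roots indexed by `I`. -/
def perpIn (J I : Set B) : Set V := {γ ∈ G.PhiIn J | ∀ s ∈ I, G.form γ (G.α s) = 0}

/-- `Φ^{⊥I}`: the roots orthogonal to all simple roots indexed by `I`. -/
def perp (I : Set B) : Set V := {γ ∈ G.Phi | ∀ s ∈ I, G.form γ (G.α s) = 0}

/-- `W^{⊥I} = W(Φ^{⊥I})`. -/
def Wperp (I : Set B) : Subgroup W := G.WR (G.perp I)

/-- `R^I = S(Φ^{⊥I})`. -/
def RI (I : Set B) : Set W := G.SR (G.perp I)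

/-- `Π^I = Π(Φ^{⊥I})`. -/
def PiPerp (I : Set B) : Set V := G.simpleSet (G.perp I)

/-- `C_I = {w ∈ W : w · α_s = α_s for all s ∈ I}`. -/
def CI (I : Set B) : Set W := {w : W | ∀ s ∈ I, G.ρ w (G.α s) = G.α s}

/-- `Y_I = {w ∈ C_I : w · (Φ^{⊥I} ∩ Φ⁺) = Φ^{⊥I} ∩ Φ⁺}`. -/
def YI (I : Set B) : Set W :=
  {w ∈ G.CI I | (fun v => G.ρ w v) '' (G.perp I ∩ G.PhiPos) = G.perp I ∩ G.PhiPos}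

/-- A root basis: a set of positive roots whose pairwise form values are governed by the
orders of the products of the corresponding reflections. -/
def IsRootBasis (Ψ : Set V) : Prop :=
  Ψ ⊆ G.PhiPos ∧ ∀ β ∈ Ψ, ∀ γ ∈ Ψ,
    (orderOf (G.reflAlong β * G.reflAlong γ) ≠ 0 →
      G.form β γ = - Real.cos (Real.pi / (orderOf (G.reflAlong β * G.reflAlong γ) : ℝ))) ∧
    (orderOf (G.reflAlong β * G.reflAlong γ) = 0 → G.form β γ ≤ -1)

end GeomRep
namespace GeomRep

variable (G : GeomRep M cs V)

/-- The simple roots as a basis. -/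
noncomputable def bas : Module.Basis B ℝ V := Module.Basis.mk G.indep G.spans

@[simp] lemma bas_apply (i : B) : G.bas i = G.α i := Module.Basis.mk_apply _ _ _

lemma repr_alpha (i : B) : G.bas.repr (G.α i) = Finsupp.single i 1 := by
  rw [← G.bas_apply i, Module.Basis.repr_self]

/-- The nonnegative cone. -/
def Cone : Set V := {v | ∀ i, 0 ≤ G.bas.repr v i}

lemma cone_add {u v : V} (hu : u ∈ G.Cone) (hv : v ∈ G.Cone) : u + v ∈ G.Cone := fun i => by
  rw [map_add]; exact add_nonneg (hu i) (hv i)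

lemma cone_smul {v : V} {a : ℝ} (ha : 0 ≤ a) (hv : v ∈ G.Cone) : a • v ∈ G.Cone := fun i => by
  rw [map_smul]; exact mul_nonneg ha (hv i)

lemma alpha_mem_cone (i : B) : G.α i ∈ G.Cone := fun j => by
  rw [G.repr_alpha, Finsupp.single_apply]
  split_ifs <;> norm_num

lemma form_self (i : B) : G.form (G.α i) (G.α i) = 1 := by
  have h := G.form_simple_fin i i (by simp [M.diagonal i])
  rw [M.diagonal i] at h
  simpa [Real.cos_pi] using h

lemma form_offdiag_nonpos {i j : B} (h : i ≠ j) : G.form (G.α i) (G.α j) ≤ 0 := by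
  rcases eq_or_ne (M i j) 0 with h0 | h0
  · rw [G.form_simple_inf i j h0]; norm_num
  · rw [G.form_simple_fin i j h0]
    have h2 : 2 ≤ M i j := by
      have := M.off_diagonal i j h
      omega
    have hm2 : (2:ℝ) ≤ (M i j : ℝ) := by exact_mod_cast h2
    have hc : 0 ≤ Real.cos (Real.pi / (M i j : ℝ)) := by
      apply Real.cos_nonneg_of_mem_Icc
      constructor
      · have h1 : (0:ℝ) ≤ Real.pi / (M i j : ℝ) := by positivity
        have := Real.pi_pos
        linarith
      · rw [div_le_div_iff₀ (by linarith) (by norm_num)]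
        nlinarith [Real.pi_pos]
    linarith

lemma rho_mul_apply (x y : W) (v : V) : G.ρ (x * y) v = G.ρ x (G.ρ y v) := by
  rw [map_mul]; rfl

@[simp] lemma rho_one_apply (v : V) : G.ρ 1 v = v := by rw [map_one]; rfl

lemma rho_inv_apply (w : W) (v : V) : G.ρ w⁻¹ (G.ρ w v) = v := by
  rw [← G.rho_mul_apply, inv_mul_cancel, G.rho_one_apply]

lemma rho_apply_inv (w : W) (v : V) : G.ρ w (G.ρ w⁻¹ v) = v := by
  rw [← G.rho_mul_apply, mul_inv_cancel, G.rho_one_apply]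

lemma form_rho_left (w : W) (u v : V) : G.form (G.ρ w u) v = G.form u (G.ρ w⁻¹ v) := by
  conv_lhs => rw [← G.rho_apply_inv w v]
  rw [G.invariant]

lemma alpha_mem_Phi (i : B) : G.α i ∈ G.Phi := ⟨1, i, by rw [G.rho_one_apply]⟩

lemma rho_mem_Phi {γ : V} (h : γ ∈ G.Phi) (w : W) : G.ρ w γ ∈ G.Phi := by
  obtain ⟨x, i, rfl⟩ := h
  exact ⟨w * x, i, by rw [G.rho_mul_apply]⟩

lemma simple_apply_self (i : B) : G.ρ (cs.simple i) (G.α i) = - G.α i := by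
  rw [G.simple_act, G.form_self]
  module

lemma neg_mem_Phi {γ : V} (h : γ ∈ G.Phi) : -γ ∈ G.Phi := by
  obtain ⟨x, i, rfl⟩ := h
  refine ⟨x * cs.simple i, i, ?_⟩
  rw [G.rho_mul_apply, G.simple_apply_self, map_neg]

lemma root_norm {γ : V} (h : γ ∈ G.Phi) : G.form γ γ = 1 := by
  obtain ⟨x, i, rfl⟩ := h
  rw [G.invariant, G.form_self]

lemma root_ne_zero {γ : V} (h : γ ∈ G.Phi) : γ ≠ 0 := by
  intro h0
  have h1 := G.root_norm h
  rw [h0] at h1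
  simp at h1

lemma sum_repr (v : V) : ((G.bas.repr v).sum fun i r => r • G.α i) = v := by
  calc ((G.bas.repr v).sum fun i r => r • G.α i)
      = ((G.bas.repr v).sum fun i r => r • G.bas i) := by simp only [G.bas_apply]
    _ = v := by rw [← Finsupp.linearCombination_apply, G.bas.linearCombination_repr]

lemma repr_sum (c : B →₀ ℝ) : G.bas.repr (c.sum fun i r => r • G.α i) = c := by
  rw [map_finsuppSum]
  simp only [map_smul, G.repr_alpha, Finsupp.smul_single, smul_eq_mul, mul_one]
  exact Finsupp.sum_single c

lemma mem_PhiPos_iff {γ : V} (h : γ ∈ G.Phi) : γ ∈ G.PhiPos ↔ γ ∈ G.Cone := by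
  constructor
  · rintro ⟨-, c, hc, rfl⟩ i
    rw [G.repr_sum]; exact hc i
  · intro hc
    exact ⟨h, G.bas.repr γ, hc, (G.sum_repr γ).symm⟩

lemma mem_PhiNeg_iff {γ : V} (h : γ ∈ G.Phi) : γ ∈ G.PhiNeg ↔ ∀ i, G.bas.repr γ i ≤ 0 := by
  have := G.mem_PhiPos_iff (G.neg_mem_Phi h)
  rw [GeomRep.PhiNeg, Set.mem_setOf_eq, this]
  constructor
  · intro hc i
    have := hc i
    rw [map_neg] at this
    simp only [Finsupp.coe_neg, Pi.neg_apply] at this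
    linarith
  · intro hc i
    rw [map_neg]
    simp only [Finsupp.coe_neg, Pi.neg_apply]
    linarith [hc i]

lemma not_pos_and_neg {γ : V} (h : γ ∈ G.Phi) (h1 : γ ∈ G.PhiPos) (h2 : γ ∈ G.PhiNeg) : False := by
  rw [G.mem_PhiPos_iff h] at h1
  rw [G.mem_PhiNeg_iff h] at h2
  apply G.root_ne_zero h
  apply G.bas.repr.injective
  rw [map_zero]
  ext i
  exact le_antisymm (h2 i) (h1 i)

lemma alpha_mem_PhiPos (i : B) : G.α i ∈ G.PhiPos :=
  (G.mem_PhiPos_iff (G.alpha_mem_Phi i)).2 (G.alpha_mem_cone i)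

end GeomRep
namespace GeomRep

variable (G : GeomRep M cs V)

lemma conj_simple_apply (w : W) (i : B) (v : V) :
    G.ρ (w * cs.simple i * w⁻¹) v
      = v - (2 * G.form (G.ρ w (G.α i)) v) • G.ρ w (G.α i) := by
  rw [G.rho_mul_apply, G.rho_mul_apply, G.simple_act, map_sub, map_smul, G.rho_apply_inv,
    G.form_rho_left]

lemma reflAlong_apply {γ : V} (h : γ ∈ G.Phi) (v : V) :
    G.ρ (G.reflAlong γ) v = v - (2 * G.form γ v) • γ := by
  rw [GeomRep.reflAlong, dif_pos h]
  have hw : G.ρ h.choose (G.α h.choose_spec.choose) = γ := h.choose_spec.choose_spec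
  rw [G.conj_simple_apply, hw]

lemma reflAlong_eq_conj {γ : V} (h : γ ∈ G.Phi) {w : W} {i : B}
    (hw : G.ρ w (G.α i) = γ) : G.reflAlong γ = w * cs.simple i * w⁻¹ := by
  apply G.faithful
  apply LinearEquiv.toLinearMap_injective
  apply LinearMap.ext
  intro v
  show G.ρ (G.reflAlong γ) v = G.ρ (w * cs.simple i * w⁻¹) v
  rw [G.conj_simple_apply, hw, G.reflAlong_apply h]

lemma reflAlong_simple (i : B) : G.reflAlong (G.α i) = cs.simple i := by
  have := G.reflAlong_eq_conj (G.alpha_mem_Phi i) (w := 1) (i := i) (G.rho_one_apply _)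
  simpa using this

lemma reflAlong_conj {γ : V} (h : γ ∈ G.Phi) (w : W) :
    G.reflAlong (G.ρ w γ) = w * G.reflAlong γ * w⁻¹ := by
  obtain ⟨x, i, hx⟩ := h
  have h' : γ ∈ G.Phi := ⟨x, i, hx⟩
  rw [G.reflAlong_eq_conj h' hx,
    G.reflAlong_eq_conj (G.rho_mem_Phi h' w) (w := w * x) (i := i)
      (by rw [G.rho_mul_apply, hx])]
  group

lemma reflAlong_apply_self {γ : V} (h : γ ∈ G.Phi) :
    G.ρ (G.reflAlong γ) γ = -γ := by
  rw [G.reflAlong_apply h, G.root_norm h]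
  module

lemma reflAlong_mul_self {γ : V} (h : γ ∈ G.Phi) :
    G.reflAlong γ * G.reflAlong γ = 1 := by
  apply G.faithful
  apply LinearEquiv.toLinearMap_injective
  apply LinearMap.ext
  intro v
  show G.ρ (G.reflAlong γ * G.reflAlong γ) v = G.ρ 1 v
  rw [G.rho_one_apply, G.rho_mul_apply, G.reflAlong_apply h, G.reflAlong_apply h, map_sub,
    map_smul, G.root_norm h]
  simp only [smul_eq_mul]
  module

lemma reflAlong_neg {γ : V} (h : γ ∈ G.Phi) :
    G.reflAlong (-γ) = G.reflAlong γ := by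
  apply G.faithful
  apply LinearEquiv.toLinearMap_injective
  apply LinearMap.ext
  intro v
  show G.ρ (G.reflAlong (-γ)) v = G.ρ (G.reflAlong γ) v
  rw [G.reflAlong_apply (G.neg_mem_Phi h), G.reflAlong_apply h, map_neg, LinearMap.neg_apply]
  module

end GeomRep

/-- Chebyshev-like sequence controlling dihedral coefficients. -/
noncomputable def cheb (C : ℝ) : ℕ → ℝ
  | 0 => 0
  | 1 => 1
  | (n + 2) => 2 * C * cheb C (n + 1) - cheb C n

lemma cheb_zero (C : ℝ) : cheb C 0 = 0 := rfl
lemma cheb_one (C : ℝ) : cheb C 1 = 1 := rfl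
lemma cheb_add_two (C : ℝ) (n : ℕ) : cheb C (n + 2) = 2 * C * cheb C (n + 1) - cheb C n := rfl

lemma cheb_of_one : ∀ n, cheb 1 n = n := by
  intro n
  induction n using Nat.strong_induction_on with
  | _ n ih =>
    match n with
    | 0 => simp [cheb_zero]
    | 1 => norm_num [cheb_one]
    | (m + 2) =>
      rw [cheb_add_two, ih (m+1) (by omega), ih m (by omega)]
      push_cast
      ring

lemma cheb_sin {m : ℕ} (hm : 2 ≤ m) :
    ∀ n, cheb (Real.cos (Real.pi / m)) n
      = Real.sin (n * (Real.pi / m)) / Real.sin (Real.pi / m) := by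
  have hθpos : 0 < Real.pi / m := by
    apply div_pos Real.pi_pos
    exact_mod_cast Nat.lt_of_lt_of_le Nat.zero_lt_two hm
  have hm2 : (2:ℝ) ≤ (m:ℝ) := by exact_mod_cast hm
  have hθlt : Real.pi / m < Real.pi := by
    rw [div_lt_iff₀ (by linarith : (0:ℝ) < (m:ℝ))]
    have h2 : Real.pi * 2 ≤ Real.pi * m := mul_le_mul_of_nonneg_left hm2 Real.pi_pos.le
    linarith [Real.pi_pos]
  have hsinpos : 0 < Real.sin (Real.pi / m) := Real.sin_pos_of_pos_of_lt_pi hθpos hθlt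
  intro n
  induction n using Nat.strong_induction_on with
  | _ n ih =>
    match n with
    | 0 => simp [cheb_zero]
    | 1 =>
      rw [cheb_one, Nat.cast_one, one_mul, div_self (ne_of_gt hsinpos)]
    | (k + 2) =>
      rw [cheb_add_two, ih (k+1) (by omega), ih k (by omega)]
      have key : Real.sin ((k + 2 : ℕ) * (Real.pi / m))
          = 2 * Real.cos (Real.pi / m) * Real.sin ((k + 1 : ℕ) * (Real.pi / m))
            - Real.sin (k * (Real.pi / m)) := by
        have e1 : ((k + 2 : ℕ) : ℝ) * (Real.pi / m)
            = ((k + 1 : ℕ) : ℝ) * (Real.pi / m) + Real.pi / m := by push_cast; ring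
        have e2 : (k : ℝ) * (Real.pi / m)
            = ((k + 1 : ℕ) : ℝ) * (Real.pi / m) - Real.pi / m := by push_cast; ring
        rw [e1, e2, Real.sin_add, Real.sin_sub]
        ring
      rw [key]
      field_simp

lemma cheb_nonneg_sin {m : ℕ} (hm : 2 ≤ m) {n : ℕ} (hn : n ≤ m) :
    0 ≤ cheb (Real.cos (Real.pi / m)) n := by
  rw [cheb_sin hm n]
  have hmpos : (0:ℝ) < m := by exact_mod_cast Nat.lt_of_lt_of_le Nat.zero_lt_two hm
  have hm2 : (2:ℝ) ≤ (m:ℝ) := by exact_mod_cast hm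
  have hθpos : 0 < Real.pi / m := div_pos Real.pi_pos hmpos
  have hθlt : Real.pi / m < Real.pi := by
    rw [div_lt_iff₀ hmpos]
    have h2 : Real.pi * 2 ≤ Real.pi * m := mul_le_mul_of_nonneg_left hm2 Real.pi_pos.le
    linarith [Real.pi_pos]
  apply div_nonneg
  · apply Real.sin_nonneg_of_nonneg_of_le_pi
    · positivity
    · have h1 : (n:ℝ) * (Real.pi / m) ≤ (m:ℝ) * (Real.pi / m) := by
        apply mul_le_mul_of_nonneg_right _ (le_of_lt hθpos)
        exact_mod_cast hn
      have h2 : (m:ℝ) * (Real.pi / m) = Real.pi := by field_simp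
      linarith
  · linarith [Real.sin_pos_of_pos_of_lt_pi hθpos hθlt]

namespace GeomRep

variable (G : GeomRep M cs V)

/-- Coefficients of the action of alternating dihedral words on a simple root. -/
lemma alt_apply (i j : B) (k : ℕ) :
    G.ρ (cs.wordProd (CoxeterSystem.alternatingWord i j k)) (G.α i)
      = (if Even k then cheb (-(G.form (G.α i) (G.α j))) (k+1)
          else cheb (-(G.form (G.α i) (G.α j))) k) • G.α i
        + (if Even k then cheb (-(G.form (G.α i) (G.α j))) k
          else cheb (-(G.form (G.α i) (G.α j))) (k+1)) • G.α j := by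
  set C := -(G.form (G.α i) (G.α j)) with hC
  induction k with
  | zero =>
    simp [CoxeterSystem.alternatingWord, cheb_zero, cheb_one]
  | succ k ihk =>
    rw [CoxeterSystem.alternatingWord_succ', CoxeterSystem.wordProd_cons, G.rho_mul_apply, ihk]
    have hji : G.form (G.α j) (G.α i) = -C := by rw [G.symm]; rw [hC]; ring
    have hii : G.form (G.α i) (G.α i) = 1 := G.form_self i
    have hjj : G.form (G.α j) (G.α j) = 1 := G.form_self j
    rcases Nat.even_or_odd k with he | ho
    · have hne : ¬ Even (k+1) := by simp [Nat.even_add_one, he]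
      simp only [if_pos he, if_neg hne]
      rw [G.simple_act]
      rw [map_add, map_smul, map_smul, hji, hjj]
      rw [cheb_add_two]
      simp only [smul_eq_mul]
      module
    · have hne : ¬ Even k := by simp [Nat.not_even_iff_odd.mpr ho]
      have he1 : Even (k+1) := by simp [Nat.even_add_one, hne]
      simp only [if_neg hne, if_pos he1]
      rw [G.simple_act]
      rw [map_add, map_smul, map_smul, hii, G.symm (G.α i) (G.α j), hji]
      rw [cheb_add_two]
      simp only [smul_eq_mul]
      module

end GeomRep
namespace GeomRep

variable (G : GeomRep M cs V)

lemma alt_coeff_nonneg {i j : B} (hij : i ≠ j) {k' : ℕ} (hk : M i j = 0 ∨ k' ≤ M i j) :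
    0 ≤ cheb (-(G.form (G.α i) (G.α j))) k' := by
  rcases eq_or_ne (M i j) 0 with h0 | h0
  · rw [G.form_simple_inf i j h0]
    rw [show -(-1 : ℝ) = 1 by ring, cheb_of_one]
    positivity
  · have hk' : k' ≤ M i j := by tauto
    have h2 : 2 ≤ M i j := by
      have := M.off_diagonal i j hij
      omega
    rw [G.form_simple_fin i j h0, neg_neg]
    exact cheb_nonneg_sin h2 hk'

lemma strip (N : ℕ)
    (IH : ∀ v : W, cs.length v < N → ∀ i : B,
      cs.length v < cs.length (v * cs.simple i) → G.ρ v (G.α i) ∈ G.Cone)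
    (i j : B) (hij : i ≠ j) :
    ∀ (n : ℕ) (v : W), cs.length v = n → ∀ k, 1 ≤ k →
      cs.length (v * cs.wordProd (CoxeterSystem.alternatingWord i j k)) = n + k →
      n + k = N →
      N < cs.length (v * cs.wordProd (CoxeterSystem.alternatingWord i j k) * cs.simple i) →
      G.ρ (v * cs.wordProd (CoxeterSystem.alternatingWord i j k)) (G.α i) ∈ G.Cone := by
  intro n
  induction n using Nat.strong_induction_on with
  | _ n ihn =>
    intro v hv k hk hlen hN hasc
    by_cases hd : cs.length (v * cs.simple (if Even k then j else i)) < cs.length v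
    · -- strip one more letter
      set nx := if Even k then j else i with hnx
      have hw : v * cs.wordProd (CoxeterSystem.alternatingWord i j k)
          = (v * cs.simple nx) * cs.wordProd (CoxeterSystem.alternatingWord i j (k+1)) := by
        rw [CoxeterSystem.alternatingWord_succ', CoxeterSystem.wordProd_cons, ← hnx,
          mul_assoc, ← mul_assoc (cs.simple nx), cs.simple_mul_simple_self, one_mul]
      have hlv' : cs.length (v * cs.simple nx) = n - 1 := by
        rcases cs.length_mul_simple v nx with h | h <;> omega
      have h1n : 1 ≤ n := by omega
      have hcone := ihn (n-1) (by omega) (v * cs.simple nx) hlv' (k+1) (by omega)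
        (by rw [← hw]; omega) (by omega) (by rw [← hw]; exact hasc)
      rw [hw]
      exact hcone
    · push_neg at hd
      have hdne := cs.length_mul_simple_ne v (if Even k then j else i)
      have hxasc : cs.length v < cs.length (v * cs.simple (if Even k then j else i)) :=
        lt_of_le_of_ne hd (Ne.symm hdne)
      have hother : cs.length v < cs.length (v * cs.simple (if Even k then i else j)) := by
        have hw2 : v * cs.wordProd (CoxeterSystem.alternatingWord i j k)
            = (v * cs.simple (if Even k then i else j))
              * cs.wordProd (CoxeterSystem.alternatingWord i j (k-1)) := by
          conv_lhs => rw [show k = (k-1)+1 by omega]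
          rw [CoxeterSystem.alternatingWord_succ', CoxeterSystem.wordProd_cons]
          have hsw : (if Even (k-1) then j else i) = (if Even k then i else j) := by
            rcases Nat.even_or_odd k with h | h
            · have hne1 : ¬ Even (k-1) := by
                obtain ⟨t, ht⟩ := h
                rintro ⟨r, hr⟩
                omega
              simp [h, hne1]
            · have h' : ¬ Even k := by
                obtain ⟨t, ht⟩ := h
                rintro ⟨r, hr⟩
                omega
              have h2 : Even (k-1) := by
                obtain ⟨t, ht⟩ := h
                exact ⟨t, by omega⟩
              simp [h', h2]
          rw [hsw, mul_assoc]
        have hle := cs.length_mul_le (v * cs.simple (if Even k then i else j))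
          (cs.wordProd (CoxeterSystem.alternatingWord i j (k-1)))
        rw [← hw2] at hle
        have hwl := cs.length_wordProd_le (CoxeterSystem.alternatingWord i j (k-1))
        rw [CoxeterSystem.length_alternatingWord] at hwl
        rcases cs.length_mul_simple v (if Even k then i else j) with h | h <;> omega
      have hasci : cs.length v < cs.length (v * cs.simple i) := by
        rcases Nat.even_or_odd k with h | h
        · simpa [h] using hother
        · simpa [Nat.not_even_iff_odd.mpr h] using hxasc
      have hascj : cs.length v < cs.length (v * cs.simple j) := by
        rcases Nat.even_or_odd k with h | h
        · simpa [h] using hxasc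
        · simpa [Nat.not_even_iff_odd.mpr h] using hother
      have hvlt : cs.length v < N := by omega
      have hci := IH v hvlt i hasci
      have hcj := IH v hvlt j hascj
      by_cases hm : M i j ≠ 0 ∧ M i j ≤ k
      · exfalso
        have hMji : M j i = M i j := M.symmetric j i
        have hnr := cs.not_isReduced_alternatingWord j i (by rw [hMji]; exact hm.1)
          (by rw [hMji]; omega : k + 1 > M j i)
        have hpr : cs.wordProd (CoxeterSystem.alternatingWord i j k) * cs.simple i
            = cs.wordProd (CoxeterSystem.alternatingWord j i (k+1)) := by
          rw [CoxeterSystem.alternatingWord_succ, CoxeterSystem.wordProd_concat]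
        have hne : cs.length (cs.wordProd (CoxeterSystem.alternatingWord j i (k+1))) ≠ k+1 := by
          intro hh
          apply hnr
          unfold CoxeterSystem.IsReduced
          rw [CoxeterSystem.length_alternatingWord]
          exact hh
        have hle2 := cs.length_wordProd_le (CoxeterSystem.alternatingWord j i (k+1))
        rw [CoxeterSystem.length_alternatingWord] at hle2
        have hle3 := cs.length_mul_le v (cs.wordProd (CoxeterSystem.alternatingWord j i (k+1)))
        have heq : v * cs.wordProd (CoxeterSystem.alternatingWord j i (k+1))
            = v * cs.wordProd (CoxeterSystem.alternatingWord i j k) * cs.simple i := by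
          rw [← hpr, mul_assoc]
        rw [heq] at hle3
        omega
      · have hcase : M i j = 0 ∨ k + 1 ≤ M i j := by
          rcases eq_or_ne (M i j) 0 with h | h
          · exact Or.inl h
          · exact Or.inr (by omega)
        have hcase' : M i j = 0 ∨ k ≤ M i j := by
          rcases hcase with h | h
          exacts [Or.inl h, Or.inr (by omega)]
        rw [G.rho_mul_apply, G.alt_apply, map_add, map_smul, map_smul]
        apply G.cone_add <;> apply G.cone_smul
        · split_ifs
          · exact G.alt_coeff_nonneg hij hcase
          · exact G.alt_coeff_nonneg hij hcase'
        · exact hci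
        · split_ifs
          · exact G.alt_coeff_nonneg hij hcase'
          · exact G.alt_coeff_nonneg hij hcase
        · exact hcj

end GeomRep
namespace GeomRep

variable (G : GeomRep M cs V)

/-- Tits' theorem: ascent implies the root is positive. -/
lemma cone_of_ascent : ∀ (w : W) (i : B),
    cs.length w < cs.length (w * cs.simple i) → G.ρ w (G.α i) ∈ G.Cone := by
  suffices H : ∀ (N : ℕ) (w : W) (i : B), cs.length w = N →
      cs.length w < cs.length (w * cs.simple i) → G.ρ w (G.α i) ∈ G.Cone by
    intro w i h
    exact H _ w i rfl h
  intro N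
  induction N using Nat.strong_induction_on with
  | _ N ihN =>
    intro w i hw hasc
    rcases eq_or_ne w 1 with rfl | hne
    · simpa using G.alpha_mem_cone i
    · obtain ⟨j, hj⟩ := cs.exists_rightDescent_of_ne_one hne
      unfold CoxeterSystem.IsRightDescent at hj
      have hij : i ≠ j := by
        rintro rfl
        omega
      have hvj : cs.length (w * cs.simple j) = N - 1 := by
        rcases cs.length_mul_simple w j with h | h <;> omega
      have hw1 : (w * cs.simple j) * cs.wordProd (CoxeterSystem.alternatingWord i j 1) = w := by
        have : CoxeterSystem.alternatingWord i j 1 = [j] := rfl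
        rw [this, CoxeterSystem.wordProd_singleton, mul_assoc, cs.simple_mul_simple_self,
          mul_one]
      have hres := G.strip N (fun v hv i' h' => ihN _ hv v i' rfl h') i j hij (N-1)
        (w * cs.simple j) hvj 1 le_rfl (by rw [hw1]; omega) (by omega)
        (by rw [hw1]; omega)
      rw [hw1] at hres
      exact hres

lemma mem_PhiPos_of_ascent {w : W} {i : B}
    (h : cs.length w < cs.length (w * cs.simple i)) : G.ρ w (G.α i) ∈ G.PhiPos :=
  (G.mem_PhiPos_iff (G.rho_mem_Phi (G.alpha_mem_Phi i) w)).2 (G.cone_of_ascent w i h)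

lemma mem_PhiNeg_of_descent {w : W} {i : B}
    (h : cs.length (w * cs.simple i) < cs.length w) : G.ρ w (G.α i) ∈ G.PhiNeg := by
  have h2 : cs.length (w * cs.simple i) < cs.length ((w * cs.simple i) * cs.simple i) := by
    rw [mul_assoc, cs.simple_mul_simple_self, mul_one]
    exact h
  have := G.mem_PhiPos_of_ascent h2
  show -(G.ρ w (G.α i)) ∈ G.PhiPos
  have he : -(G.ρ w (G.α i)) = G.ρ (w * cs.simple i) (G.α i) := by
    rw [G.rho_mul_apply, G.simple_apply_self, map_neg]
  rw [he]
  exact this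

lemma root_pos_or_neg {γ : V} (h : γ ∈ G.Phi) : γ ∈ G.PhiPos ∨ γ ∈ G.PhiNeg := by
  obtain ⟨w, i, rfl⟩ := h
  rcases Nat.lt_or_ge (cs.length w) (cs.length (w * cs.simple i)) with h1 | h1
  · exact Or.inl (G.mem_PhiPos_of_ascent h1)
  · refine Or.inr (G.mem_PhiNeg_of_descent ?_)
    exact lt_of_le_of_ne h1 (cs.length_mul_simple_ne w i)

lemma descent_iff {w : W} {i : B} :
    cs.length (w * cs.simple i) < cs.length w ↔ G.ρ w (G.α i) ∈ G.PhiNeg := by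
  constructor
  · exact G.mem_PhiNeg_of_descent
  · intro h
    rcases Nat.lt_or_ge (cs.length w) (cs.length (w * cs.simple i)) with h1 | h1
    · exact absurd (G.mem_PhiPos_of_ascent h1) fun hp =>
        G.not_pos_and_neg (G.rho_mem_Phi (G.alpha_mem_Phi i) w) hp h
    · exact lt_of_le_of_ne h1 (cs.length_mul_simple_ne w i)

lemma ascent_iff {w : W} {i : B} :
    cs.length w < cs.length (w * cs.simple i) ↔ G.ρ w (G.α i) ∈ G.PhiPos := by
  constructor
  · exact G.mem_PhiPos_of_ascent
  · intro h
    rcases Nat.lt_or_ge (cs.length w) (cs.length (w * cs.simple i)) with h1 | h1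
    · exact h1
    · have h2 := G.mem_PhiNeg_of_descent (lt_of_le_of_ne h1 (cs.length_mul_simple_ne w i))
      exact absurd h fun hp =>
        G.not_pos_and_neg (G.rho_mem_Phi (G.alpha_mem_Phi i) w) hp h2

/-- A simple reflection permutes the positive roots other than its own simple root. -/
lemma simple_perm_pos {γ : V} (hγ : γ ∈ G.Phi) (hpos : γ ∈ G.PhiPos) (j : B)
    (hne : γ ≠ G.α j) : G.ρ (cs.simple j) γ ∈ G.PhiPos := by
  have hc := (G.mem_PhiPos_iff hγ).1 hpos
  have hl : ∃ l, l ≠ j ∧ 0 < G.bas.repr γ l := by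
    by_contra hcon
    push_neg at hcon
    have hγj : γ = (G.bas.repr γ j) • G.α j := by
      apply G.bas.repr.injective
      ext l
      rw [map_smul, G.repr_alpha]
      rcases eq_or_ne l j with rfl | hlj
      · simp
      · have h1 := hcon l hlj
        have h2 := hc l
        have h0 : G.bas.repr γ l = 0 := le_antisymm h1 h2
        rw [h0]
        simp [Finsupp.single_apply, Ne.symm hlj]
    have hn := G.root_norm hγ
    rw [hγj] at hn
    simp only [map_smul, LinearMap.smul_apply, smul_eq_mul, G.form_self, mul_one] at hn
    rcases mul_self_eq_one_iff.1 hn with h | h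
    · rw [h, one_smul] at hγj
      exact hne hγj
    · have := hc j
      rw [h] at this
      norm_num at this
  obtain ⟨l, hlj, hlpos⟩ := hl
  have hmem : G.ρ (cs.simple j) γ ∈ G.Phi := G.rho_mem_Phi hγ _
  rcases G.root_pos_or_neg hmem with h | h
  · exact h
  · exfalso
    have := (G.mem_PhiNeg_iff hmem).1 h l
    rw [G.simple_act, map_sub, map_smul, G.repr_alpha] at this
    simp only [Finsupp.coe_sub, Pi.sub_apply, Finsupp.coe_smul, Pi.smul_apply, smul_eq_mul,
      Finsupp.single_apply] at this
    rw [if_neg (Ne.symm hlj)] at this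
    simp at this
    linarith

/-- T3: if `w` sends the positive root `γ` to a negative root, then `ℓ(w s_γ) < ℓ(w)`. -/
lemma length_mul_reflAlong_lt :
    ∀ (w : W) {γ : V}, γ ∈ G.Phi → γ ∈ G.PhiPos → G.ρ w γ ∈ G.PhiNeg →
      cs.length (w * G.reflAlong γ) < cs.length w := by
  suffices H : ∀ (N : ℕ) (w : W), cs.length w = N → ∀ {γ : V}, γ ∈ G.Phi → γ ∈ G.PhiPos →
      G.ρ w γ ∈ G.PhiNeg → cs.length (w * G.reflAlong γ) < cs.length w by
    intro w γ h1 h2 h3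
    exact H _ w rfl h1 h2 h3
  intro N
  induction N using Nat.strong_induction_on with
  | _ N ihN =>
    intro w hw γ hγ hpos hneg
    have hne : w ≠ 1 := by
      rintro rfl
      rw [G.rho_one_apply] at hneg
      exact G.not_pos_and_neg hγ hpos hneg
    obtain ⟨j, hj⟩ := cs.exists_rightDescent_of_ne_one hne
    unfold CoxeterSystem.IsRightDescent at hj
    rcases eq_or_ne γ (G.α j) with rfl | hγj
    · rw [G.reflAlong_simple]
      exact hj
    · set γ' := G.ρ (cs.simple j) γ with hγ'
      have hγ'mem : γ' ∈ G.Phi := G.rho_mem_Phi hγ _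
      have hγ'pos : γ' ∈ G.PhiPos := G.simple_perm_pos hγ hpos j hγj
      have hwj : cs.length (w * cs.simple j) = N - 1 := by
        rcases cs.length_mul_simple w j with h | h <;> omega
      have hss : ∀ v : V, G.ρ (cs.simple j) (G.ρ (cs.simple j) v) = v := fun v => by
        rw [← G.rho_mul_apply, cs.simple_mul_simple_self, G.rho_one_apply]
      have hact : G.ρ (w * cs.simple j) γ' = G.ρ w γ := by
        rw [hγ', G.rho_mul_apply, hss]
      have hrec := ihN (N-1) (by omega) (w * cs.simple j) hwj hγ'mem hγ'pos
        (by rw [hact]; exact hneg)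
      have hconj : G.reflAlong γ' = cs.simple j * G.reflAlong γ * cs.simple j := by
        rw [hγ', G.reflAlong_conj hγ, cs.inv_simple]
      rw [hconj] at hrec
      have he2 : w * cs.simple j * (cs.simple j * G.reflAlong γ * cs.simple j)
          = w * G.reflAlong γ * cs.simple j := by
        have h3 : cs.simple j * (cs.simple j * G.reflAlong γ * cs.simple j)
            = G.reflAlong γ * cs.simple j := by
          rw [← mul_assoc, ← mul_assoc, cs.simple_mul_simple_self, one_mul]
        rw [mul_assoc, h3, ← mul_assoc]
      rw [he2, hwj] at hrec
      rcases cs.length_mul_simple (w * G.reflAlong γ) j with h | h <;> omega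

end GeomRep
namespace GeomRep

variable (G : GeomRep M cs V)

lemma length_lt_mul_reflAlong {w : W} {γ : V} (hγ : γ ∈ G.Phi) (hpos : γ ∈ G.PhiPos)
    (hwγ : G.ρ w γ ∈ G.PhiPos) : cs.length w < cs.length (w * G.reflAlong γ) := by
  have h1 : G.ρ (w * G.reflAlong γ) γ ∈ G.PhiNeg := by
    rw [G.rho_mul_apply, G.reflAlong_apply_self hγ, map_neg]
    show -(-(G.ρ w γ)) ∈ G.PhiPos
    rw [neg_neg]
    exact hwγ
  have h2 := G.length_mul_reflAlong_lt (w * G.reflAlong γ) hγ hpos h1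
  rw [mul_assoc, G.reflAlong_mul_self hγ, mul_one] at h2
  exact h2

lemma perp_neg {I : Set B} {γ : V} (h : γ ∈ G.perp I) : -γ ∈ G.perp I := by
  refine ⟨G.neg_mem_Phi h.1, fun s hs => ?_⟩
  rw [map_neg, LinearMap.neg_apply, h.2 s hs, neg_zero]

lemma reflAlong_mem_Wperp {I : Set B} {γ : V} (h : γ ∈ G.perp I) :
    G.reflAlong γ ∈ G.Wperp I :=
  Subgroup.subset_closure ⟨γ, h, rfl⟩

lemma Wperp_fix {I : Set B} {u : W} (hu : u ∈ G.Wperp I) :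
    ∀ s ∈ I, G.ρ u (G.α s) = G.α s := by
  refine Subgroup.closure_induction ?_ ?_ ?_ ?_ hu
  · rintro x ⟨γ, hγ, rfl⟩ s hs
    rw [G.reflAlong_apply hγ.1, hγ.2 s hs]
    simp
  · intro s hs
    rw [G.rho_one_apply]
  · intro x y hx hy px py s hs
    rw [G.rho_mul_apply, py s hs, px s hs]
  · intro x hx px s hs
    conv_lhs => rw [← px s hs]
    rw [G.rho_inv_apply]

lemma Wperp_stab_perp {I : Set B} {u : W} (hu : u ∈ G.Wperp I) {γ : V} (hγ : γ ∈ G.perp I) :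
    G.ρ u γ ∈ G.perp I := by
  refine ⟨G.rho_mem_Phi hγ.1 u, fun s hs => ?_⟩
  have h2 : G.form (G.ρ u γ) (G.ρ u (G.α s)) = G.form γ (G.α s) := G.invariant u γ (G.α s)
  rw [G.Wperp_fix hu s hs] at h2
  rw [h2, hγ.2 s hs]

lemma conj_mem_Wperp {I : Set B} {w : W} (hw : ∀ γ ∈ G.perp I, G.ρ w γ ∈ G.perp I)
    {u : W} (hu : u ∈ G.Wperp I) : w * u * w⁻¹ ∈ G.Wperp I := by
  refine Subgroup.closure_induction ?_ ?_ ?_ ?_ hu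
  · rintro x ⟨γ, hγ, rfl⟩
    rw [← G.reflAlong_conj hγ.1 w]
    exact G.reflAlong_mem_Wperp (hw γ hγ)
  · simpa using (G.Wperp I).one_mem
  · intro x y hx hy px py
    have h : w * (x * y) * w⁻¹ = (w * x * w⁻¹) * (w * y * w⁻¹) := by group
    rw [h]
    exact mul_mem px py
  · intro x hx px
    have h : w * x⁻¹ * w⁻¹ = (w * x * w⁻¹)⁻¹ := by group
    rw [h]
    exact inv_mem px

lemma rho_sub_mem_span {S : Set W} {P : Submodule ℝ V}
    (hgen : ∀ x ∈ S, ∀ v : V, G.ρ x v - v ∈ P) {u : W} (hu : u ∈ Subgroup.closure S) :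
    ∀ v : V, G.ρ u v - v ∈ P := by
  refine Subgroup.closure_induction ?_ ?_ ?_ ?_ hu
  · exact hgen
  · intro v
    simp
  · intro x y hx hy px py v
    have h : G.ρ (x * y) v - v = (G.ρ x (G.ρ y v) - G.ρ y v) + (G.ρ y v - v) := by
      rw [G.rho_mul_apply]
      abel
    rw [h]
    exact add_mem (px _) (py v)
  · intro x hx px v
    have h : G.ρ x⁻¹ v - v = -(G.ρ x (G.ρ x⁻¹ v) - G.ρ x⁻¹ v) := by
      rw [G.rho_apply_inv]
      abel
    rw [h]
    exact neg_mem (px _)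

end GeomRep
/-- A generic conjugation lemma for subgroup closures. -/
lemma c15_conj_closure_le {W : Type*} [Group W] {S : Set W} {H : Subgroup W} {w : W}
    (hgen : ∀ r ∈ S, w * r * w⁻¹ ∈ H) : ∀ x ∈ Subgroup.closure S, w * x * w⁻¹ ∈ H := by
  intro x hx
  refine Subgroup.closure_induction ?_ ?_ ?_ ?_ hx
  · exact hgen
  · simpa using H.one_mem
  · intro a b ha hb pa pb
    have he : w * (a * b) * w⁻¹ = (w * a * w⁻¹) * (w * b * w⁻¹) := by group
    rw [he]
    exact mul_mem pa pb
  · intro a ha pa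
    have he : w * a⁻¹ * w⁻¹ = (w * a * w⁻¹)⁻¹ := by group
    rw [he]
    exact inv_mem pa

namespace GeomRep

variable (G : GeomRep M cs V)

lemma neg_mem_PhiNeg {γ : V} (h : γ ∈ G.PhiPos) : -γ ∈ G.PhiNeg := by
  show -(-γ) ∈ G.PhiPos
  rwa [neg_neg]

lemma reflAlong_inv {γ : V} (h : γ ∈ G.Phi) : (G.reflAlong γ)⁻¹ = G.reflAlong γ :=
  inv_eq_of_mul_eq_one_left (G.reflAlong_mul_self h)

/-- Depth of a positive root. -/
noncomputable def dp (γ : V) : ℕ :=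
  if h : ∃ k : ℕ, ∃ w : W, cs.length w = k ∧ G.ρ w γ ∈ G.PhiNeg then Nat.find h else 0

lemma dp_exists {γ : V} (hγ : γ ∈ G.Phi) (hp : γ ∈ G.PhiPos) :
    ∃ k : ℕ, ∃ w : W, cs.length w = k ∧ G.ρ w γ ∈ G.PhiNeg :=
  ⟨cs.length (G.reflAlong γ), G.reflAlong γ, rfl, by
    rw [G.reflAlong_apply_self hγ]
    exact G.neg_mem_PhiNeg hp⟩

lemma dp_spec {γ : V} (hγ : γ ∈ G.Phi) (hp : γ ∈ G.PhiPos) :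
    ∃ w : W, cs.length w = G.dp γ ∧ G.ρ w γ ∈ G.PhiNeg := by
  rw [GeomRep.dp, dif_pos (G.dp_exists hγ hp)]
  exact Nat.find_spec (G.dp_exists hγ hp)

lemma dp_min {γ : V} (hγ : γ ∈ G.Phi) (hp : γ ∈ G.PhiPos) {w : W}
    (hw : G.ρ w γ ∈ G.PhiNeg) : G.dp γ ≤ cs.length w := by
  rw [GeomRep.dp, dif_pos (G.dp_exists hγ hp)]
  exact Nat.find_le ⟨w, rfl, hw⟩

lemma dp_pos {γ : V} (hγ : γ ∈ G.Phi) (hp : γ ∈ G.PhiPos) : 1 ≤ G.dp γ := by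
  by_contra h
  push_neg at h
  obtain ⟨w, hw, hneg⟩ := G.dp_spec hγ hp
  have h0 : G.dp γ = 0 := by omega
  rw [h0] at hw
  rw [cs.length_eq_zero_iff.1 hw, G.rho_one_apply] at hneg
  exact G.not_pos_and_neg hγ hp hneg

lemma dp_one_simple {γ : V} (hγ : γ ∈ G.Phi) (hp : γ ∈ G.PhiPos) (h1 : G.dp γ = 1) :
    ∃ i, γ = G.α i := by
  obtain ⟨w, hw, hneg⟩ := G.dp_spec hγ hp
  rw [h1] at hw
  obtain ⟨i, rfl⟩ := cs.length_eq_one_iff.1 hw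
  by_contra hne
  push_neg at hne
  exact G.not_pos_and_neg (G.rho_mem_Phi hγ _)
    (G.simple_perm_pos hγ hp i (hne i)) hneg

lemma dp_descent {γ : V} (hγ : γ ∈ G.Phi) (hp : γ ∈ G.PhiPos) (h2 : 2 ≤ G.dp γ) :
    ∃ i, G.ρ (cs.simple i) γ ∈ G.PhiPos ∧ G.dp (G.ρ (cs.simple i) γ) < G.dp γ := by
  obtain ⟨w, hw, hneg⟩ := G.dp_spec hγ hp
  have hne : w ≠ 1 := by
    rintro rfl
    rw [G.rho_one_apply] at hneg
    exact G.not_pos_and_neg hγ hp hneg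
  obtain ⟨i, hi⟩ := cs.exists_rightDescent_of_ne_one hne
  unfold CoxeterSystem.IsRightDescent at hi
  refine ⟨i, ?_, ?_⟩
  · rcases eq_or_ne γ (G.α i) with rfl | hnei
    · exfalso
      have hd1 : G.dp (G.α i) ≤ 1 := by
        have h3 := G.dp_min hγ hp (w := cs.simple i)
          (by rw [G.simple_apply_self]; exact G.neg_mem_PhiNeg hp)
        rwa [cs.length_simple] at h3
      omega
    · exact G.simple_perm_pos hγ hp i hnei
  · have hpos' : G.ρ (cs.simple i) γ ∈ G.PhiPos := by
      rcases eq_or_ne γ (G.α i) with rfl | hnei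
      · exfalso
        have hd1 : G.dp (G.α i) ≤ 1 := by
          have h3 := G.dp_min hγ hp (w := cs.simple i)
            (by rw [G.simple_apply_self]; exact G.neg_mem_PhiNeg hp)
          rwa [cs.length_simple] at h3
        omega
      · exact G.simple_perm_pos hγ hp i hnei
    have hss : G.ρ (cs.simple i) (G.ρ (cs.simple i) γ) = γ := by
      rw [← G.rho_mul_apply, cs.simple_mul_simple_self, G.rho_one_apply]
    have hact : G.ρ (w * cs.simple i) (G.ρ (cs.simple i) γ) = G.ρ w γ := by
      rw [G.rho_mul_apply, hss]
    have hle := G.dp_min (G.rho_mem_Phi hγ _) hpos' (w := w * cs.simple i) (by rw [hact]; exact hneg)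
    have hlen : cs.length (w * cs.simple i) = cs.length w - 1 := by
      rcases cs.length_mul_simple w i with h | h <;> omega
    omega

/-- A good subset of roots: closed under negation and its own reflections. -/
def IsGoodSet (Ψ : Set V) : Prop :=
  Ψ ⊆ G.Phi ∧ (∀ γ ∈ Ψ, -γ ∈ Ψ) ∧ ∀ γ ∈ Ψ, ∀ β ∈ Ψ, G.ρ (G.reflAlong γ) β ∈ Ψ

/-- The positive roots of `Ψ` inverted by the reflection along `γ`. -/
def ASet (Ψ : Set V) (γ : V) : Set V := {β ∈ Ψ ∩ G.PhiPos | G.ρ (G.reflAlong γ) β ∈ G.PhiNeg}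

/-- The canonical simple roots of `Ψ`. -/
def DeltaSet (Ψ : Set V) : Set V := {γ ∈ Ψ ∩ G.PhiPos | G.ASet Ψ γ = {γ}}

lemma perp_good (I : Set B) : G.IsGoodSet (G.perp I) := by
  refine ⟨fun γ hγ => hγ.1, fun γ hγ => G.perp_neg hγ, fun γ hγ β hβ => ?_⟩
  refine ⟨G.rho_mem_Phi hβ.1 _, fun s hs => ?_⟩
  rw [G.reflAlong_apply hγ.1, map_sub, map_smul, LinearMap.sub_apply, LinearMap.smul_apply,
    hβ.2 s hs, hγ.2 s hs]
  simp

lemma good_image {Ψ : Set V} (hΨ : G.IsGoodSet Ψ) (w : W) :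
    G.IsGoodSet ((fun v => G.ρ w v) '' Ψ) := by
  obtain ⟨h1, h2, h3⟩ := hΨ
  refine ⟨?_, ?_, ?_⟩
  · rintro _ ⟨γ, hγ, rfl⟩
    show G.ρ w γ ∈ G.Phi
    exact G.rho_mem_Phi (h1 hγ) w
  · rintro _ ⟨γ, hγ, rfl⟩
    refine ⟨-γ, h2 γ hγ, ?_⟩
    show G.ρ w (-γ) = -(G.ρ w γ)
    rw [map_neg]
  · rintro _ ⟨γ, hγ, rfl⟩ _ ⟨β, hβ, rfl⟩
    refine ⟨G.ρ (G.reflAlong γ) β, h3 γ hγ β hβ, ?_⟩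
    show G.ρ w (G.ρ (G.reflAlong γ) β) = G.ρ (G.reflAlong (G.ρ w γ)) (G.ρ w β)
    rw [G.reflAlong_conj (h1 hγ) w, G.rho_mul_apply, G.rho_mul_apply, G.rho_inv_apply]

lemma mem_ASet_self {Ψ : Set V} (hΨ : G.IsGoodSet Ψ) {γ : V} (hγ : γ ∈ Ψ ∩ G.PhiPos) :
    γ ∈ G.ASet Ψ γ := by
  refine ⟨hγ, ?_⟩
  rw [G.reflAlong_apply_self (hΨ.1 hγ.1)]
  exact G.neg_mem_PhiNeg hγ.2

lemma simple_mem_Delta {Ψ : Set V} (hΨ : G.IsGoodSet Ψ) {i : B} (hi : G.α i ∈ Ψ) :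
    G.α i ∈ G.DeltaSet Ψ := by
  refine ⟨⟨hi, G.alpha_mem_PhiPos i⟩, ?_⟩
  apply Set.Subset.antisymm
  · rintro β ⟨⟨hβΨ, hβpos⟩, hβneg⟩
    rw [G.reflAlong_simple] at hβneg
    by_contra hne
    exact G.not_pos_and_neg (G.rho_mem_Phi (hΨ.1 hβΨ) _)
      (G.simple_perm_pos (hΨ.1 hβΨ) hβpos i hne) hβneg
  · rintro β hβ
    rw [hβ]
    exact G.mem_ASet_self hΨ ⟨hi, G.alpha_mem_PhiPos i⟩

lemma good_stab {Ψ : Set V} (hΨ : G.IsGoodSet Ψ) {x : W} (hx : x ∈ G.WR Ψ) :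
    ∀ β ∈ Ψ, G.ρ x β ∈ Ψ := by
  have key : ∀ β ∈ Ψ, G.ρ x β ∈ Ψ ∧ G.ρ x⁻¹ β ∈ Ψ := by
    refine Subgroup.closure_induction ?_ ?_ ?_ ?_ hx
    · rintro _ ⟨γ, hγ, rfl⟩ β hβ
      constructor
      · exact hΨ.2.2 γ hγ β hβ
      · rw [G.reflAlong_inv (hΨ.1 hγ)]
        exact hΨ.2.2 γ hγ β hβ
    · intro β hβ
      exact ⟨by rw [G.rho_one_apply]; exact hβ, by rw [inv_one, G.rho_one_apply]; exact hβ⟩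
    · intro a b ha hb pa pb β hβ
      constructor
      · rw [G.rho_mul_apply]
        exact (pa _ ((pb β hβ).1)).1
      · rw [mul_inv_rev, G.rho_mul_apply]
        exact (pb _ ((pa β hβ).2)).2
    · intro a ha pa β hβ
      rw [inv_inv]
      exact ⟨(pa β hβ).2, (pa β hβ).1⟩
  exact fun β hβ => (key β hβ).1

lemma alpha_not_mem_image {Ψ : Set V} (hΨ : G.IsGoodSet Ψ) {i : B} (hi : G.α i ∉ Ψ) :
    G.α i ∉ (fun v => G.ρ (cs.simple i) v) '' Ψ := by
  rintro ⟨γ, hγ, he⟩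
  have : γ = G.ρ (cs.simple i) (G.α i) := by
    rw [← he, ← G.rho_mul_apply, cs.simple_mul_simple_self, G.rho_one_apply]
  rw [G.simple_apply_self] at this
  subst this
  exact hi (by simpa using hΨ.2.1 _ hγ)

lemma simple_image_pos {Ψ : Set V} (hΨ : G.IsGoodSet Ψ) {i : B} (hi : G.α i ∉ Ψ)
    {β : V} (hβ : β ∈ Ψ ∩ G.PhiPos) :
    G.ρ (cs.simple i) β ∈ ((fun v => G.ρ (cs.simple i) v) '' Ψ) ∩ G.PhiPos := by
  refine ⟨⟨β, hβ.1, rfl⟩, ?_⟩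
  apply G.simple_perm_pos (hΨ.1 hβ.1) hβ.2
  rintro rfl
  exact hi hβ.1

lemma Delta_simple_conj {Ψ : Set V} (hΨ : G.IsGoodSet Ψ) {i : B} (hi : G.α i ∉ Ψ)
    {δ : V} (hδ : δ ∈ G.DeltaSet Ψ) :
    G.ρ (cs.simple i) δ ∈ G.DeltaSet ((fun v => G.ρ (cs.simple i) v) '' Ψ) := by
  obtain ⟨hδm, hδA⟩ := hδ
  have hgood' := G.good_image hΨ (cs.simple i)
  refine ⟨G.simple_image_pos hΨ hi hδm, ?_⟩
  apply Set.Subset.antisymm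
  · rintro η ⟨⟨⟨η', hη', rfl⟩, hηpos⟩, hηneg⟩
    have hη'pos : η' ∈ G.PhiPos := by
      rcases G.root_pos_or_neg (hΨ.1 hη') with h | h
      · exact h
      · exfalso
        have h2 : -η' ∈ Ψ ∩ G.PhiPos := ⟨hΨ.2.1 _ hη', h⟩
        have h3 := (G.simple_image_pos hΨ hi h2).2
        rw [map_neg] at h3
        have h4 : G.ρ (cs.simple i) η' ∈ G.PhiNeg := h3
        exact G.not_pos_and_neg (G.rho_mem_Phi (hΨ.1 hη') _) hηpos h4
    -- reflection along ρ(s i) δ is s i * reflAlong δ * s i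
    have hconj : G.reflAlong (G.ρ (cs.simple i) δ)
        = cs.simple i * G.reflAlong δ * (cs.simple i)⁻¹ :=
      G.reflAlong_conj (hΨ.1 hδm.1) (cs.simple i)
    rw [hconj, cs.inv_simple, G.rho_mul_apply, G.rho_mul_apply] at hηneg
    have hss : G.ρ (cs.simple i) (G.ρ (cs.simple i) η') = η' := by
      rw [← G.rho_mul_apply, cs.simple_mul_simple_self, G.rho_one_apply]
    rw [hss] at hηneg
    -- ξ := ρ (reflAlong δ) η' ∈ ±Ψ
    set ξ := G.ρ (G.reflAlong δ) η' with hξ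
    have hξΨ : ξ ∈ Ψ := hΨ.2.2 δ hδm.1 η' hη'
    have hξneg : ξ ∈ G.PhiNeg := by
      rcases G.root_pos_or_neg (hΨ.1 hξΨ) with h | h
      · exfalso
        have := G.simple_perm_pos (hΨ.1 hξΨ) h i (fun hh => hi (hh ▸ hξΨ))
        exact G.not_pos_and_neg (G.rho_mem_Phi (hΨ.1 hξΨ) _) this hηneg
      · exact h
    have hη'A : η' ∈ G.ASet Ψ δ := ⟨⟨hη', hη'pos⟩, hξneg⟩
    rw [hδA] at hη'A
    rw [hη'A]
    rfl
  · rintro η hη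
    rw [hη]
    exact G.mem_ASet_self hgood' (G.simple_image_pos hΨ hi hδm)

end GeomRep
namespace GeomRep

variable (G : GeomRep M cs V)

lemma gen : ∀ (d : ℕ) (Ψ : Set V), G.IsGoodSet Ψ → ∀ γ, γ ∈ Ψ → γ ∈ G.PhiPos → G.dp γ = d →
    G.reflAlong γ ∈ Subgroup.closure (G.reflAlong '' G.DeltaSet Ψ) := by
  intro d
  induction d using Nat.strong_induction_on with
  | _ d ihd =>
    intro Ψ hΨ γ hγΨ hγpos hd
    have hγPhi : γ ∈ G.Phi := hΨ.1 hγΨ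
    rcases Nat.lt_or_ge (G.dp γ) 2 with hlt | hge
    · have h1 : G.dp γ = 1 := by
        have := G.dp_pos hγPhi hγpos
        omega
      obtain ⟨i, rfl⟩ := G.dp_one_simple hγPhi hγpos h1
      exact Subgroup.subset_closure ⟨G.α i, G.simple_mem_Delta hΨ hγΨ, rfl⟩
    · obtain ⟨i, hpos', hdlt⟩ := G.dp_descent hγPhi hγpos hge
      rw [hd] at hdlt
      set γ' := G.ρ (cs.simple i) γ with hγ'
      have hγ'Phi : γ' ∈ G.Phi := G.rho_mem_Phi hγPhi _
      have hγback : γ = G.ρ (cs.simple i) γ' := by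
        rw [hγ', ← G.rho_mul_apply, cs.simple_mul_simple_self, G.rho_one_apply]
      have hrefl : G.reflAlong γ = cs.simple i * G.reflAlong γ' * cs.simple i := by
        have h2 := G.reflAlong_conj hγ'Phi (cs.simple i)
        rw [← hγback, cs.inv_simple] at h2
        exact h2
      by_cases hiΨ : G.α i ∈ Ψ
      · have hγ'Ψ : γ' ∈ Ψ := by
          have h3 := hΨ.2.2 (G.α i) hiΨ γ hγΨ
          rwa [G.reflAlong_simple] at h3
        have hIH := ihd _ hdlt Ψ hΨ γ' hγ'Ψ hpos' rfl
        rw [hrefl]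
        have hsi : cs.simple i ∈ Subgroup.closure (G.reflAlong '' G.DeltaSet Ψ) :=
          Subgroup.subset_closure ⟨G.α i, G.simple_mem_Delta hΨ hiΨ, G.reflAlong_simple i⟩
        exact mul_mem (mul_mem hsi hIH) hsi
      · set Ψ' := (fun v => G.ρ (cs.simple i) v) '' Ψ with hΨ'
        have hgood' := G.good_image hΨ (cs.simple i)
        have hγ'Ψ' : γ' ∈ Ψ' := ⟨γ, hγΨ, rfl⟩
        have hIH := ihd _ hdlt Ψ' hgood' γ' hγ'Ψ' hpos' rfl
        rw [hrefl]
        have hconj : ∀ r ∈ G.reflAlong '' G.DeltaSet Ψ',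
            cs.simple i * r * (cs.simple i)⁻¹
              ∈ Subgroup.closure (G.reflAlong '' G.DeltaSet Ψ) := by
          rintro _ ⟨δ', hδ', rfl⟩
          have hαΨ' : G.α i ∉ Ψ' := G.alpha_not_mem_image hΨ hiΨ
          have h3 := G.Delta_simple_conj hgood' hαΨ' hδ'
          have hΨ'' : (fun v => G.ρ (cs.simple i) v) '' Ψ' = Ψ := by
            have hcomp : ∀ v ∈ Ψ, G.ρ (cs.simple i) (G.ρ (cs.simple i) v) = v := fun v _ => by
              rw [← G.rho_mul_apply, cs.simple_mul_simple_self, G.rho_one_apply]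
            rw [hΨ', Set.image_image, Set.image_congr hcomp, Set.image_id']
          rw [hΨ''] at h3
          have hδ'Phi : δ' ∈ G.Phi := hgood'.1 hδ'.1.1
          have h4 : cs.simple i * G.reflAlong δ' * (cs.simple i)⁻¹
              = G.reflAlong (G.ρ (cs.simple i) δ') := by
            rw [G.reflAlong_conj hδ'Phi, cs.inv_simple]
          rw [h4]
          exact Subgroup.subset_closure ⟨_, h3, rfl⟩
        have h5 := c15_conj_closure_le hconj _ hIH
        rwa [cs.inv_simple] at h5

/-- Product of reflections along a list of roots. -/
def prodRefl (L : List V) : W := (L.map G.reflAlong).prod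

@[simp] lemma prodRefl_nil : G.prodRefl [] = 1 := rfl

lemma prodRefl_cons (γ : V) (L : List V) :
    G.prodRefl (γ :: L) = G.reflAlong γ * G.prodRefl L := by
  simp [GeomRep.prodRefl]

lemma prodRefl_append (L L' : List V) :
    G.prodRefl (L ++ L') = G.prodRefl L * G.prodRefl L' := by
  simp [GeomRep.prodRefl]

lemma prodRefl_reverse (L : List V) (hL : ∀ γ ∈ L, γ ∈ G.Phi) :
    G.prodRefl L.reverse = (G.prodRefl L)⁻¹ := by
  induction L with
  | nil => simp
  | cons γ T ih =>
    rw [List.reverse_cons, G.prodRefl_append,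
      ih (fun x hx => hL x (List.mem_cons_of_mem _ hx))]
    conv_rhs => rw [G.prodRefl_cons, mul_inv_rev,
      G.reflAlong_inv (hL γ List.mem_cons_self)]
    simp [GeomRep.prodRefl]

lemma prodRefl_mem_WR {Ψ : Set V} {L : List V} (hmem : ∀ γ ∈ L, γ ∈ Ψ) :
    G.prodRefl L ∈ G.WR Ψ := by
  induction L with
  | nil => exact (G.WR Ψ).one_mem
  | cons γ T ih =>
    rw [G.prodRefl_cons]
    exact mul_mem (Subgroup.subset_closure ⟨γ, hmem γ List.mem_cons_self, rfl⟩)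
      (ih fun x hx => hmem x (List.mem_cons_of_mem _ hx))

lemma exch {Ψ : Set V} (hΨ : G.IsGoodSet Ψ) :
    ∀ (L : List V), (∀ γ ∈ L, γ ∈ G.DeltaSet Ψ) → ∀ δ, δ ∈ G.DeltaSet Ψ →
    G.ρ (G.prodRefl L) δ ∈ G.PhiNeg →
    ∃ L' : List V, (∀ γ ∈ L', γ ∈ G.DeltaSet Ψ) ∧ L'.length + 1 = L.length ∧
      G.prodRefl L' = G.prodRefl L * G.reflAlong δ := by
  intro L
  induction L with
  | nil =>
    intro _ δ hδ hneg
    exfalso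
    rw [G.prodRefl_nil, G.rho_one_apply] at hneg
    exact G.not_pos_and_neg (hΨ.1 hδ.1.1) hδ.1.2 hneg
  | cons γ T ih =>
    intro hmem δ hδ hneg
    have hγΔ : γ ∈ G.DeltaSet Ψ := hmem γ List.mem_cons_self
    have hTmem : ∀ x ∈ T, x ∈ G.DeltaSet Ψ := fun x hx => hmem x (List.mem_cons_of_mem _ hx)
    have hζΨ : G.ρ (G.prodRefl T) δ ∈ Ψ :=
      G.good_stab hΨ (G.prodRefl_mem_WR (fun x hx => (hTmem x hx).1.1)) δ hδ.1.1
    rcases G.root_pos_or_neg (hΨ.1 hζΨ) with hp | hn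
    · have hneg2 : G.ρ (G.reflAlong γ) (G.ρ (G.prodRefl T) δ) ∈ G.PhiNeg := by
        rw [← G.rho_mul_apply, ← G.prodRefl_cons]
        exact hneg
      have hζA : G.ρ (G.prodRefl T) δ ∈ G.ASet Ψ γ := ⟨⟨hζΨ, hp⟩, hneg2⟩
      rw [hγΔ.2] at hζA
      have hζγ : G.ρ (G.prodRefl T) δ = γ := hζA
      have hc := G.reflAlong_conj (hΨ.1 hδ.1.1) (G.prodRefl T)
      rw [hζγ] at hc
      refine ⟨T, hTmem, by simp, ?_⟩
      rw [G.prodRefl_cons, hc]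
      group
      rw [mul_assoc, G.reflAlong_mul_self (hΨ.1 hδ.1.1), mul_one]
    · obtain ⟨T', hT'mem, hT'len, hT'prod⟩ := ih hTmem δ hδ hn
      refine ⟨γ :: T', fun x hx => ?_, by simp [← hT'len], ?_⟩
      · rcases List.mem_cons.1 hx with rfl | hx'
        exacts [hγΔ, hT'mem x hx']
      · rw [G.prodRefl_cons, hT'prod, G.prodRefl_cons, mul_assoc]

lemma free_trivial {Ψ : Set V} (hΨ : G.IsGoodSet Ψ) :
    ∀ (k : ℕ) (L : List V), L.length = k → (∀ γ ∈ L, γ ∈ G.DeltaSet Ψ) →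
    (∀ β, β ∈ Ψ → β ∈ G.PhiPos → G.ρ (G.prodRefl L) β ∉ G.PhiNeg) → G.prodRefl L = 1 := by
  intro k
  induction k using Nat.strong_induction_on with
  | _ k ihk =>
    intro L hlen hmem hfree
    rcases List.eq_nil_or_concat L with rfl | ⟨T, δ, rfl⟩
    · rfl
    · have hδΔ : δ ∈ G.DeltaSet Ψ := hmem δ (by simp)
      have hTmem : ∀ x ∈ T, x ∈ G.DeltaSet Ψ := fun x hx => hmem x (by simp [hx])
      have hprod : G.prodRefl (T.concat δ) = G.prodRefl T * G.reflAlong δ := by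
        rw [List.concat_eq_append, G.prodRefl_append]
        have h1 : G.prodRefl [δ] = G.reflAlong δ := by simp [GeomRep.prodRefl]
        rw [h1]
      have hζΨ : G.ρ (G.prodRefl T) δ ∈ Ψ :=
        G.good_stab hΨ (G.prodRefl_mem_WR (fun x hx => (hTmem x hx).1.1)) δ hδΔ.1.1
      rcases G.root_pos_or_neg (hΨ.1 hζΨ) with hp | hn
      · exfalso
        have h2 : G.ρ (G.prodRefl (T.concat δ)) δ ∈ G.PhiNeg := by
          rw [hprod, G.rho_mul_apply, G.reflAlong_apply_self (hΨ.1 hδΔ.1.1), map_neg]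
          exact G.neg_mem_PhiNeg hp
        exact hfree δ hδΔ.1.1 hδΔ.1.2 h2
      · obtain ⟨T', hT'mem, hT'len, hT'prod⟩ := G.exch hΨ T hTmem δ hδΔ hn
        have hx : G.prodRefl T' = G.prodRefl (T.concat δ) := by
          rw [hT'prod, hprod]
        have hlenc : (T.concat δ).length = T.length + 1 := by simp
        have hk2 : T'.length < k := by omega
        have h3 := ihk T'.length hk2 T' rfl hT'mem (fun β h1 h2 => by
          rw [hx]
          exact hfree β h1 h2)
        rw [← hx]
        exact h3

lemma exists_list_of_mem_closure {S : Set V} (hS : ∀ γ ∈ S, γ ∈ G.Phi) {x : W}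
    (hx : x ∈ Subgroup.closure (G.reflAlong '' S)) :
    ∃ L : List V, (∀ γ ∈ L, γ ∈ S) ∧ x = G.prodRefl L := by
  refine Subgroup.closure_induction ?_ ?_ ?_ ?_ hx
  · rintro _ ⟨γ, hγ, rfl⟩
    refine ⟨[γ], by simp [hγ], ?_⟩
    simp [GeomRep.prodRefl]
  · exact ⟨[], by simp, rfl⟩
  · rintro a b ha hb ⟨La, hLa, rfl⟩ ⟨Lb, hLb, rfl⟩
    refine ⟨La ++ Lb, fun γ hγ => ?_, (G.prodRefl_append La Lb).symm⟩
    rcases List.mem_append.1 hγ with h | h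
    exacts [hLa γ h, hLb γ h]
  · rintro a ha ⟨L, hL, rfl⟩
    exact ⟨L.reverse, fun γ hγ => hL γ (List.mem_reverse.1 hγ),
      (G.prodRefl_reverse L (fun γ hγ => hS γ (hL γ hγ))).symm⟩

lemma WR_le_closure_Delta {Ψ : Set V} (hΨ : G.IsGoodSet Ψ) :
    G.WR Ψ ≤ Subgroup.closure (G.reflAlong '' G.DeltaSet Ψ) := by
  apply (Subgroup.closure_le _).2
  rintro _ ⟨γ, hγ, rfl⟩
  rcases G.root_pos_or_neg (hΨ.1 hγ) with hp | hn
  · exact G.gen _ Ψ hΨ γ hγ hp rfl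
  · rw [← G.reflAlong_neg (hΨ.1 hγ)]
    exact G.gen _ Ψ hΨ (-γ) (hΨ.2.1 γ hγ) hn rfl

end GeomRep

/-- Adjacency in the Coxeter graph: distinct vertices with bond `m ≥ 3` (or `∞`, coded `0`). -/
def adj (M : CoxeterMatrix B) (a b : B) : Prop := a ≠ b ∧ M a b ≠ 2

/-- Connectivity within the subgraph of the Coxeter graph induced on `A`. -/
def connIn (M : CoxeterMatrix B) (A : Set B) (a b : B) : Prop :=
  Relation.ReflTransGen (fun x y => x ∈ A ∧ y ∈ A ∧ adj M x y) a b

/-- `J_{∼K}`: the union of the connected components of the Coxeter graph induced on `J ∪ K`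
that have nonempty intersection with `K`. -/
def compUnion (M : CoxeterMatrix B) (J K : Set B) : Set B :=
  {a ∈ J ∪ K | ∃ k ∈ K, connIn M (J ∪ K) a k}

/-- The connected component of `s` in the Coxeter graph induced on `I`. -/
def component (M : CoxeterMatrix B) (I : Set B) (s : B) : Set B := {t ∈ I | connIn M I s t}

/-- `A` is an irreducible component of `I`. -/
def IsComponent (M : CoxeterMatrix B) (I A : Set B) : Prop := ∃ s ∈ I, A = component M I s

/-- `A` is a union of irreducible components of `I`. -/
def IsComponentUnion (M : CoxeterMatrix B) (I A : Set B) : Prop :=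
  A ⊆ I ∧ ∀ a ∈ A, component M I a ⊆ A

variable (cs : CoxeterSystem M W)

/-- The standard parabolic subgroup `W_I`. -/
def par (I : Set B) : Subgroup W := Subgroup.closure (cs.simple '' I)

/-- `I` is of finite type if `W_I` is finite. -/
def finType (I : Set B) : Prop := (par cs I : Set W).Finite

/-- The longest element `w₀(I)` of a finite-type standard parabolic subgroup `W_I`. -/
def w0 (I : Set B) : W :=
  if h : ∃ w ∈ par cs I, ∀ u ∈ par cs I, cs.length u ≤ cs.length w then h.choose else 1

/-- The element `ν = w₀(J_{∼s}) · w₀(J_{∼s} ∖ {s})`. -/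
def nu (J : Set B) (s : B) : W :=
  w0 cs (compUnion M J {s}) * w0 cs (compUnion M J {s} \ {s})

/-- Adjacency of two reflections in the Coxeter graph of a reflection subgroup:
their product has order at least 3 (possibly infinite). -/
def cadj (r r' : W) : Prop := r ≠ r' ∧ r * r' ≠ r' * r

/-- Connectivity within the Coxeter graph on a set `R` of reflections. -/
def cconn (R : Set W) (a b : W) : Prop :=
  Relation.ReflTransGen (fun x y => x ∈ R ∧ y ∈ R ∧ cadj x y) a b

/-- The connected component of `r` in the Coxeter graph on `R`. -/
def ccomp (R : Set W) (r : W) : Set W := {r' ∈ R | cconn R r r'}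

/-- The product of all the irreducible components of finite type of the Coxeter system
with generating set `R`. -/
def finPart (R : Set W) : Subgroup W :=
  Subgroup.closure {r ∈ R | (Subgroup.closure (ccomp R r) : Set W).Finite}

/-- The product of all the irreducible components of non-finite type of the Coxeter system
with generating set `R`. -/
def infPart (R : Set W) : Subgroup W :=
  Subgroup.closure {r ∈ R | ¬ (Subgroup.closure (ccomp R r) : Set W).Finite}


variable (G : GeomRep M cs V)

/-- `Z(W_I)`: the center of the standard parabolic subgroup `W_I`, as a subset of `W`. -/
def ZWI (I : Set B) : Set W := {w ∈ (par cs I : Set W) | ∀ u ∈ par cs I, w * u = u * w}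

/-- `B̃_I = {w ∈ Z_W(W_I) : w · (Φ^{⊥I} ∩ Φ⁺) = Φ^{⊥I} ∩ Φ⁺}`. -/
def Btilde (I : Set B) : Set W :=
  {w ∈ (Subgroup.centralizer ((par cs I : Set W)) : Set W) |
    (fun v => G.ρ w v) '' (G.perp I ∩ G.PhiPos) = G.perp I ∩ G.PhiPos}

/-- A subset of `S` is irreducible if its induced Coxeter graph is connected. -/
def IsIrred (M : CoxeterMatrix B) (J : Set B) : Prop := ∀ a ∈ J, ∀ b ∈ J, connIn M J a b

/-- An irreducible subset `J ⊆ S` of finite type is of `(-1)`-type if its longest element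
`w₀(J)` maps every simple root `α_s`, `s ∈ J`, to `-α_s`. -/
def IsMinusOneType (J : Set B) : Prop :=
  IsIrred M J ∧ finType cs J ∧ ∀ s ∈ J, G.ρ (w0 cs J) (G.α s) = - G.α s

/-- `B_I`: the elements of `B̃_I` fixing every simple root `α_s` with `s ∈ I` lying in an
irreducible component of `I` of `(-1)`-type. -/
def BI (I : Set B) : Set W :=
  {w ∈ Btilde cs G I |
    ∀ s ∈ I, IsMinusOneType cs G (component M I s) → G.ρ w (G.α s) = G.α s}

/-- `N_I = {w ∈ W : w · Π_I = Π_I}`. -/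
def NIset (I : Set B) : Set W := {w : W | (fun v => G.ρ w v) '' G.PiI I = G.PiI I}

/-- `Ỹ_I = {w ∈ N_I : w · (Φ^{⊥I} ∩ Φ⁺) = Φ^{⊥I} ∩ Φ⁺}`. -/
def Ytilde (I : Set B) : Set W :=
  {w ∈ NIset cs G I | (fun v => G.ρ w v) '' (G.perp I ∩ G.PhiPos) = G.perp I ∩ G.PhiPos}

/-- `A` is (the vertex set of) a Coxeter graph of type `A_n` with `2 ≤ n < ∞`:
a finite path with `n ≥ 2` vertices, all of whose edges have label `3`. -/
def IsTypeA (M : CoxeterMatrix B) (A : Set B) : Prop :=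
  ∃ (n : ℕ) (e : Fin n → B), 2 ≤ n ∧ Function.Injective e ∧ Set.range e = A ∧
    ∀ k l : Fin n, M (e k) (e l) =
      if (k : ℕ) + 1 = l ∨ (l : ℕ) + 1 = k then 3 else if k = l then 1 else 2

/-- A standard expression `w = ν_m ⋯ ν_1` of `w` starting at `I`: a factorization of `w`
into elements `ν_k = w₀((I_{k-1})_{∼ s_k}) · w₀((I_{k-1})_{∼ s_k} ∖ {s_k})` with
`ν_k · Π_{I_{k-1}} = Π_{I_k}` and `ℓ(w) = Σ_k ℓ(ν_k)`. -/
structure StdExpr (cs : CoxeterSystem M W) (G : GeomRep M cs V) (I : Set B) (w : W) :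
    Type _ where
  m : ℕ
  Iseq : Fin (m + 1) → Set B
  sseq : Fin m → B
  base : Iseq 0 = I
  not_mem : ∀ k : Fin m, sseq k ∉ Iseq k.castSucc
  fin : ∀ k : Fin m, finType cs (compUnion M (Iseq k.castSucc) {sseq k})
  maps : ∀ k : Fin m,
    (fun v => G.ρ (nu cs (Iseq k.castSucc) (sseq k)) v) '' G.PiI (Iseq k.castSucc) =
      G.PiI (Iseq k.succ)
  prod_eq : w = (List.ofFn fun k : Fin m => nu cs (Iseq k.castSucc) (sseq k)).reverse.prod
  len_eq : cs.length w = ∑ k : Fin m, cs.length (nu cs (Iseq k.castSucc) (sseq k))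

/-- The factor `ν_k` of a standard expression is a loop if it fixes `Π_{I_{k-1}}` pointwise. -/
def StdExpr.IsLoop {cs : CoxeterSystem M W} {G : GeomRep M cs V} {I : Set B} {w : W}
    (E : StdExpr cs G I w) (k : Fin E.m) : Prop :=
  ∀ t ∈ E.Iseq k.castSucc,
    G.ρ (nu cs (E.Iseq k.castSucc) (E.sseq k)) (G.α t) = G.α t

/-- The product `ν_k ⋯ ν_1` of the first (rightmost) `k` factors of a standard expression. -/
def StdExpr.tail {cs : CoxeterSystem M W} {G : GeomRep M cs V} {I : Set B} {w : W}
    (E : StdExpr cs G I w) (k : ℕ) : W :=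
  ((List.ofFn fun j : Fin E.m => nu cs (E.Iseq j.castSucc) (E.sseq j)).take k).reverse.prod
section Conjuncts

lemma c15_NIset_one (I : Set B) : (1 : W) ∈ NIset cs G I := by
  show (fun v => G.ρ 1 v) '' G.PiI I = G.PiI I
  have h : ∀ v ∈ G.PiI I, G.ρ 1 v = v := fun v _ => G.rho_one_apply v
  rw [Set.image_congr h, Set.image_id']

lemma c15_NIset_mul {I : Set B} {w₁ w₂ : W} (h₁ : w₁ ∈ NIset cs G I)
    (h₂ : w₂ ∈ NIset cs G I) : w₁ * w₂ ∈ NIset cs G I := by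
  show (fun v => G.ρ (w₁ * w₂) v) '' G.PiI I = G.PiI I
  have h : ∀ v ∈ G.PiI I, G.ρ (w₁ * w₂) v = G.ρ w₁ (G.ρ w₂ v) :=
    fun v _ => G.rho_mul_apply w₁ w₂ v
  rw [Set.image_congr h]
  have : (fun v => G.ρ w₁ (G.ρ w₂ v)) '' G.PiI I
      = (fun v => G.ρ w₁ v) '' ((fun v => G.ρ w₂ v) '' G.PiI I) := by
    rw [← Set.image_comp]
    rfl
  rw [this, h₂, h₁]

lemma c15_NIset_inv {I : Set B} {w : W} (h : w ∈ NIset cs G I) : w⁻¹ ∈ NIset cs G I := by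
  show (fun v => G.ρ w⁻¹ v) '' G.PiI I = G.PiI I
  calc (fun v => G.ρ w⁻¹ v) '' G.PiI I
      = (fun v => G.ρ w⁻¹ v) '' ((fun v => G.ρ w v) '' G.PiI I) := by
        conv_lhs => rw [← h]
    _ = (fun v => G.ρ w⁻¹ (G.ρ w v)) '' G.PiI I := by rw [← Set.image_comp]; rfl
    _ = G.PiI I := by
        have h2 : ∀ v ∈ G.PiI I, G.ρ w⁻¹ (G.ρ w v) = v := fun v _ => G.rho_inv_apply w v
        rw [Set.image_congr h2, Set.image_id']

lemma c15_NIset_apply_mem {I : Set B} {w : W} (h : w ∈ NIset cs G I) {s : B} (hs : s ∈ I) :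
    ∃ t ∈ I, G.ρ w (G.α s) = G.α t := by
  have hmem : G.ρ w (G.α s) ∈ G.PiI I := by
    rw [← h]
    exact ⟨G.α s, ⟨s, hs, rfl⟩, rfl⟩
  obtain ⟨t, ht, he⟩ := hmem
  exact ⟨t, ht, he.symm⟩

lemma c15_NIset_stab_perp {I : Set B} {w : W} (h : w ∈ NIset cs G I) {γ : V}
    (hγ : γ ∈ G.perp I) : G.ρ w γ ∈ G.perp I := by
  refine ⟨G.rho_mem_Phi hγ.1 w, fun s hs => ?_⟩
  obtain ⟨t, ht, he⟩ := c15_NIset_apply_mem cs G (c15_NIset_inv cs G h) hs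
  have h2 : G.form (G.ρ w γ) (G.ρ w (G.α t)) = G.form γ (G.α t) := G.invariant w γ (G.α t)
  have h3 : G.ρ w (G.α t) = G.α s := by
    rw [← he, G.rho_apply_inv]
  rw [h3] at h2
  rw [h2, hγ.2 t ht]

lemma c15_Wperp_subset_NIset {I : Set B} {u : W} (hu : u ∈ G.Wperp I) :
    u ∈ NIset cs G I := by
  show (fun v => G.ρ u v) '' G.PiI I = G.PiI I
  have h : ∀ v ∈ G.PiI I, G.ρ u v = v := by
    rintro v ⟨t, ht, rfl⟩
    exact G.Wperp_fix hu t ht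
  rw [Set.image_congr h, Set.image_id']

lemma c15_conj_Wperp {I : Set B} {w u : W} (hw : w ∈ NIset cs G I) (hu : u ∈ G.Wperp I) :
    w * u * w⁻¹ ∈ G.Wperp I :=
  G.conj_mem_Wperp (fun γ hγ => c15_NIset_stab_perp cs G hw hγ) hu

lemma c15_conj_par {I : Set B} {w : W} (h : w ∈ NIset cs G I) {a : W} (ha : a ∈ par cs I) :
    w * a * w⁻¹ ∈ par cs I := by
  refine Subgroup.closure_induction ?_ ?_ ?_ ?_ ha
  · rintro x ⟨t, ht, rfl⟩
    obtain ⟨t', ht', he⟩ := c15_NIset_apply_mem cs G h ht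
    have h1 := G.reflAlong_eq_conj (G.alpha_mem_Phi t') he
    rw [G.reflAlong_simple] at h1
    rw [← h1]
    exact Subgroup.subset_closure ⟨t', ht', rfl⟩
  · simpa using (par cs I).one_mem
  · intro x y hx hy px py
    have he : w * (x * y) * w⁻¹ = (w * x * w⁻¹) * (w * y * w⁻¹) := by group
    rw [he]
    exact mul_mem px py
  · intro x hx px
    have he : w * x⁻¹ * w⁻¹ = (w * x * w⁻¹)⁻¹ := by group
    rw [he]
    exact inv_mem px

lemma c15_mem_normalizer {I : Set B} {w : W} (h : w ∈ NIset cs G I) :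
    w ∈ Subgroup.normalizer (par cs I) := by
  rw [Subgroup.mem_normalizer_iff]
  intro a
  constructor
  · exact fun ha => c15_conj_par cs G h ha
  · intro ha
    have h2 := c15_conj_par cs G (c15_NIset_inv cs G h) ha
    have he : w⁻¹ * (w * a * w⁻¹) * w⁻¹⁻¹ = a := by group
    rwa [he] at h2

lemma c15_par_comm {I : Set B} {a u : W} (ha : a ∈ par cs I) (hu : u ∈ G.Wperp I) :
    a * u = u * a := by
  have key : ∀ t ∈ I, Commute (cs.simple t) u := by
    intro t ht
    have h1 := G.reflAlong_eq_conj (G.alpha_mem_Phi t) (G.Wperp_fix hu t ht)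
    rw [G.reflAlong_simple] at h1
    show cs.simple t * u = u * cs.simple t
    calc cs.simple t * u = u * cs.simple t * u⁻¹ * u := by rw [← h1]
      _ = u * cs.simple t := by group
  have hcomm : Commute a u := by
    refine Subgroup.closure_induction ?_ ?_ ?_ ?_ ha
    · rintro x ⟨t, ht, rfl⟩
      exact key t ht
    · exact Commute.one_left u
    · intro x y hx hy px py
      exact px.mul_left py
    · intro x hx px
      exact px.inv_left
  exact hcomm

lemma c15_par_sub_mem_span {I : Set B} {a : W} (ha : a ∈ par cs I) (v : V) :
    G.ρ a v - v ∈ Submodule.span ℝ (G.PiI I) := by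
  refine G.rho_sub_mem_span ?_ ha v
  rintro x ⟨t, ht, rfl⟩ v'
  rw [G.simple_act]
  have he : v' - (2 * G.form (G.α t) v') • G.α t - v' = -((2 * G.form (G.α t) v') • G.α t) := by
    abel
  rw [he]
  exact neg_mem (Submodule.smul_mem _ _ (Submodule.subset_span ⟨t, ht, rfl⟩))

lemma c15_span_repr {I : Set B} {p : V} (hp : p ∈ Submodule.span ℝ (G.PiI I)) {l : B}
    (hl : l ∉ I) : G.bas.repr p l = 0 := by
  refine Submodule.span_induction ?_ ?_ ?_ ?_ hp
  · rintro x ⟨t, ht, rfl⟩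
    rw [G.repr_alpha, Finsupp.single_apply, if_neg]
    rintro rfl
    exact hl ht
  · simp
  · intro x y hx hy px py
    rw [map_add]
    simp [px, py]
  · intro r x hx px
    rw [map_smul]
    simp [px]

lemma c15_par_eq_one {I : Set B} {a : W} (ha : a ∈ par cs I)
    (hfix : ∀ t ∈ I, G.ρ a (G.α t) ∈ G.PiI I) : a = 1 := by
  by_contra hne
  obtain ⟨j, hj⟩ := cs.exists_rightDescent_of_ne_one hne
  unfold CoxeterSystem.IsRightDescent at hj
  have hneg := G.mem_PhiNeg_of_descent hj
  by_cases hjI : j ∈ I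
  · obtain ⟨t', ht', he⟩ := hfix j hjI
    refine G.not_pos_and_neg (G.rho_mem_Phi (G.alpha_mem_Phi j) a) ?_ hneg
    rw [← he]
    exact G.alpha_mem_PhiPos t'
  · have hsp := c15_par_sub_mem_span cs G ha (G.α j)
    have h1 : G.bas.repr (G.ρ a (G.α j)) j = 1 := by
      have hd : G.ρ a (G.α j) = G.α j + (G.ρ a (G.α j) - G.α j) := by abel
      rw [hd, map_add]
      have h2 := c15_span_repr cs G hsp hjI
      simp only [Finsupp.coe_add, Pi.add_apply, h2, add_zero, G.repr_alpha]
      simp [Finsupp.single_apply]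
    have h3 := (G.mem_PhiNeg_iff (G.rho_mem_Phi (G.alpha_mem_Phi j) a)).1 hneg j
    rw [h1] at h3
    norm_num at h3

lemma c15_par_inter_Wperp {I : Set B} {w : W} (hw : w ∈ par cs I) (hw2 : w ∈ G.Wperp I) :
    w = 1 :=
  c15_par_eq_one cs G hw fun t ht => by
    rw [G.Wperp_fix hw2 t ht]
    exact ⟨t, ht, rfl⟩

lemma c15_mem_Ytilde_of {I : Set B} {w : W} (hw : w ∈ NIset cs G I)
    (hnoinv : ∀ γ ∈ G.perp I ∩ G.PhiPos, G.ρ w γ ∈ G.PhiPos) : w ∈ Ytilde cs G I := by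
  refine ⟨hw, ?_⟩
  apply Set.Subset.antisymm
  · rintro _ ⟨γ, hγ, rfl⟩
    exact ⟨c15_NIset_stab_perp cs G hw hγ.1, hnoinv γ hγ⟩
  · intro δ hδ
    have h1 : G.ρ w⁻¹ δ ∈ G.perp I := c15_NIset_stab_perp cs G (c15_NIset_inv cs G hw) hδ.1
    have h2 : G.ρ w⁻¹ δ ∈ G.PhiPos := by
      rcases G.root_pos_or_neg h1.1 with h | h
      · exact h
      · exfalso
        have h3 : -(G.ρ w⁻¹ δ) ∈ G.perp I ∩ G.PhiPos := ⟨G.perp_neg h1, h⟩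
        have h4 := hnoinv _ h3
        rw [map_neg, G.rho_apply_inv] at h4
        refine G.not_pos_and_neg hδ.1.1 hδ.2 ?_
        show -δ ∈ G.PhiPos
        exact h4
    exact ⟨G.ρ w⁻¹ δ, ⟨h1, h2⟩, G.rho_apply_inv w δ⟩

lemma c15_Ytilde_sub_NIset {I : Set B} {y : W} (hy : y ∈ Ytilde cs G I) : y ∈ NIset cs G I :=
  hy.1

lemma c15_decomp {I : Set B} : ∀ (N : ℕ) (w : W), cs.length w = N → w ∈ NIset cs G I →
    ∃ u ∈ G.Wperp I, ∃ y ∈ Ytilde cs G I, w = u * y := by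
  intro N
  induction N using Nat.strong_induction_on with
  | _ N ihN =>
    intro w hw hmem
    by_cases hinv : ∀ γ ∈ G.perp I ∩ G.PhiPos, G.ρ w γ ∈ G.PhiPos
    · exact ⟨1, one_mem _, w, c15_mem_Ytilde_of cs G hmem hinv, (one_mul w).symm⟩
    · push_neg at hinv
      obtain ⟨γ, hγ, hnpos⟩ := hinv
      have hγPhi : γ ∈ G.Phi := hγ.1.1
      have hneg : G.ρ w γ ∈ G.PhiNeg := by
        rcases G.root_pos_or_neg (G.rho_mem_Phi hγPhi w) with h | h
        · exact absurd h hnpos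
        · exact h
      have hlt := G.length_mul_reflAlong_lt w hγPhi hγ.2 hneg
      have hmem' : w * G.reflAlong γ ∈ NIset cs G I :=
        c15_NIset_mul cs G hmem (c15_Wperp_subset_NIset cs G (G.reflAlong_mem_Wperp hγ.1))
      rw [hw] at hlt
      obtain ⟨u, hu, y, hy, he⟩ := ihN _ hlt _ rfl hmem'
      refine ⟨u * (y * G.reflAlong γ * y⁻¹), ?_, y, hy, ?_⟩
      · exact mul_mem hu (c15_conj_Wperp cs G hy.1 (G.reflAlong_mem_Wperp hγ.1))
      · have hr2 := G.reflAlong_mul_self hγPhi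
        calc w = w * G.reflAlong γ * G.reflAlong γ := by rw [mul_assoc, hr2, mul_one]
          _ = u * y * G.reflAlong γ := by rw [he]
          _ = u * (y * G.reflAlong γ * y⁻¹) * y := by group

end Conjuncts
section Conjuncts2

lemma c15_simple_image {I : Set B} {w : W}
    (hpos : ∀ t ∈ I, G.ρ w (G.α t) ∈ G.PhiPos)
    (hspan : ∀ t ∈ I, G.ρ w (G.α t) ∈ Submodule.span ℝ (G.PiI I))
    (hpos' : ∀ t ∈ I, G.ρ w⁻¹ (G.α t) ∈ G.PhiPos)
    {t : B} (ht : t ∈ I) : ∃ i ∈ I, G.ρ w (G.α t) = G.α i := by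
  set β := G.ρ w (G.α t) with hβ
  set c := G.bas.repr β with hc
  have hβPhi : β ∈ G.Phi := G.rho_mem_Phi (G.alpha_mem_Phi t) w
  have hcnn : ∀ l, 0 ≤ c l := (G.mem_PhiPos_iff hβPhi).1 (hpos t ht)
  have hsupp : ∀ l, l ∉ I → c l = 0 := fun l hl => c15_span_repr cs G (hspan t ht) hl
  have hexp : G.α t = c.sum fun i r => r • G.ρ w⁻¹ (G.α i) := by
    have h1 : G.α t = G.ρ w⁻¹ β := by rw [hβ, G.rho_inv_apply]
    conv_lhs => rw [h1, ← G.sum_repr β]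
    rw [map_finsuppSum]
    exact Finsupp.sum_congr fun i _ => map_smul _ _ _
  have hcoord : ∀ l, Finsupp.single t (1:ℝ) l
      = c.sum fun i r => r * G.bas.repr (G.ρ w⁻¹ (G.α i)) l := by
    intro l
    have h2 := congrArg (fun v => G.bas.repr v l) hexp
    simp only [G.repr_alpha] at h2
    rw [h2, map_finsuppSum, Finsupp.sum_apply]
    refine Finsupp.sum_congr fun i _ => ?_
    rw [map_smul]
    simp
  have hdnn : ∀ i ∈ c.support, ∀ l, 0 ≤ G.bas.repr (G.ρ w⁻¹ (G.α i)) l := by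
    intro i hi l
    have hiI : i ∈ I := by
      by_contra h
      exact (Finsupp.mem_support_iff.1 hi) (hsupp i h)
    exact (G.mem_PhiPos_iff (G.rho_mem_Phi (G.alpha_mem_Phi i) w⁻¹)).1 (hpos' i hiI) l
  have h1t := hcoord t
  rw [Finsupp.single_apply, if_pos rfl] at h1t
  have hne : (c.sum fun i r => r * G.bas.repr (G.ρ w⁻¹ (G.α i)) t) ≠ 0 := by
    rw [← h1t]
    norm_num
  rw [Finsupp.sum] at hne
  obtain ⟨i₀, hi₀supp, hi₀ne⟩ := Finset.exists_ne_zero_of_sum_ne_zero hne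
  have hi₀I : i₀ ∈ I := by
    by_contra h
    rw [hsupp i₀ h, zero_mul] at hi₀ne
    exact hi₀ne rfl
  have hci₀ : c i₀ ≠ 0 := fun h => hi₀ne (by rw [h, zero_mul])
  have hdi₀t : 0 < G.bas.repr (G.ρ w⁻¹ (G.α i₀)) t :=
    lt_of_le_of_ne (hdnn i₀ hi₀supp t) fun h => hi₀ne (by rw [← h, mul_zero])
  have hdl : ∀ l, l ≠ t → G.bas.repr (G.ρ w⁻¹ (G.α i₀)) l = 0 := by
    intro l hl
    have h3 := hcoord l
    rw [Finsupp.single_apply, if_neg (Ne.symm hl)] at h3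
    rw [Finsupp.sum] at h3
    have hterms : ∀ i ∈ c.support, 0 ≤ c i * G.bas.repr (G.ρ w⁻¹ (G.α i)) l :=
      fun i hi => mul_nonneg (hcnn i) (hdnn i hi l)
    have hz := (Finset.sum_eq_zero_iff_of_nonneg hterms).1 h3.symm i₀ hi₀supp
    rcases mul_eq_zero.1 hz with h | h
    · exact absurd h hci₀
    · exact h
  have he4 : G.ρ w⁻¹ (G.α i₀) = (G.bas.repr (G.ρ w⁻¹ (G.α i₀)) t) • G.α t := by
    apply G.bas.repr.injective
    ext l
    rw [map_smul, G.repr_alpha]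
    rcases eq_or_ne l t with rfl | hl
    · simp
    · rw [hdl l hl]
      simp [Finsupp.single_apply, Ne.symm hl]
  have hn : G.form (G.ρ w⁻¹ (G.α i₀)) (G.ρ w⁻¹ (G.α i₀)) = 1 :=
    G.root_norm (G.rho_mem_Phi (G.alpha_mem_Phi i₀) w⁻¹)
  rw [he4] at hn
  simp only [map_smul, LinearMap.smul_apply, smul_eq_mul, G.form_self, mul_one] at hn
  have hd1 : G.bas.repr (G.ρ w⁻¹ (G.α i₀)) t = 1 := by
    rcases mul_self_eq_one_iff.1 hn with h | h
    · exact h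
    · exfalso
      rw [h] at hdi₀t
      norm_num at hdi₀t
  rw [hd1, one_smul] at he4
  refine ⟨i₀, hi₀I, ?_⟩
  rw [hβ, ← he4, G.rho_apply_inv]

lemma c15_NIset_of_pos_span {I : Set B} {w : W}
    (hpos : ∀ t ∈ I, G.ρ w (G.α t) ∈ G.PhiPos)
    (hspan : ∀ t ∈ I, G.ρ w (G.α t) ∈ Submodule.span ℝ (G.PiI I))
    (hpos' : ∀ t ∈ I, G.ρ w⁻¹ (G.α t) ∈ G.PhiPos)
    (hspan' : ∀ t ∈ I, G.ρ w⁻¹ (G.α t) ∈ Submodule.span ℝ (G.PiI I)) :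
    w ∈ NIset cs G I := by
  show (fun v => G.ρ w v) '' G.PiI I = G.PiI I
  apply Set.Subset.antisymm
  · rintro _ ⟨v, ⟨t, ht, rfl⟩, rfl⟩
    obtain ⟨i, hi, he⟩ := c15_simple_image cs G hpos hspan hpos' ht
    show G.ρ w (G.α t) ∈ G.PiI I
    rw [he]
    exact ⟨i, hi, rfl⟩
  · rintro _ ⟨t, ht, rfl⟩
    have hpos'' : ∀ t ∈ I, G.ρ w⁻¹⁻¹ (G.α t) ∈ G.PhiPos := by
      rw [inv_inv]
      exact hpos
    obtain ⟨i, hi, he⟩ := c15_simple_image cs G hpos' hspan' hpos'' ht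
    refine ⟨G.α i, ⟨i, hi, rfl⟩, ?_⟩
    show G.ρ w (G.α i) = G.α t
    rw [← he, G.rho_apply_inv]

lemma c15_normalizer_NIset {I : Set B} {g : W} (hg : g ∈ Subgroup.normalizer (par cs I)) :
    ∃ a ∈ par cs I, g * a ∈ NIset cs G I := by
  have hex : ∃ n : ℕ, ∃ a ∈ par cs I, cs.length (g * a) = n :=
    ⟨cs.length (g * 1), 1, (par cs I).one_mem, rfl⟩
  classical
  set n₀ := Nat.find hex with hn₀
  obtain ⟨a, ha, hlen⟩ := Nat.find_spec hex
  have hmin : ∀ b ∈ par cs I, n₀ ≤ cs.length (g * b) := by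
    intro b hb
    by_contra h
    push_neg at h
    exact Nat.find_min hex h ⟨b, hb, rfl⟩
  set w := g * a with hwdef
  refine ⟨a, ha, ?_⟩
  have hgnorm : ∀ x ∈ par cs I, g * x * g⁻¹ ∈ par cs I := fun x hx =>
    (Subgroup.mem_normalizer_iff.1 hg x).1 hx
  have hgnorm' : ∀ x ∈ par cs I, g⁻¹ * x * g ∈ par cs I := by
    intro x hx
    have := (Subgroup.mem_normalizer_iff.1 (Subgroup.inv_mem _ hg) x).1 hx
    rwa [inv_inv] at this
  -- right ascents
  have hasc : ∀ t ∈ I, cs.length w < cs.length (w * cs.simple t) := by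
    intro t ht
    have h1 : w * cs.simple t = g * (a * cs.simple t) := by rw [hwdef, mul_assoc]
    have h2 : a * cs.simple t ∈ par cs I :=
      mul_mem ha (Subgroup.subset_closure ⟨t, ht, rfl⟩)
    have h3 := hmin _ h2
    rw [← h1] at h3
    have h4 := cs.length_mul_simple_ne w t
    rw [hlen]
    omega
  -- left ascents
  have hascL : ∀ t ∈ I, cs.length w < cs.length (cs.simple t * w) := by
    intro t ht
    have h1 : cs.simple t * w = g * ((g⁻¹ * cs.simple t * g) * a) := by
      rw [hwdef]
      group
    have h2 : (g⁻¹ * cs.simple t * g) * a ∈ par cs I :=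
      mul_mem (hgnorm' _ (Subgroup.subset_closure ⟨t, ht, rfl⟩)) ha
    have h3 := hmin _ h2
    rw [← h1] at h3
    have h4 := cs.length_simple_mul_ne w t
    rw [hlen]
    omega
  -- conjugates of simples in I lie in par
  have hconj : ∀ t ∈ I, w * cs.simple t * w⁻¹ ∈ par cs I := by
    intro t ht
    have h1 : w * cs.simple t * w⁻¹ = g * (a * cs.simple t * a⁻¹) * g⁻¹ := by
      rw [hwdef]
      group
    rw [h1]
    refine hgnorm _ ?_
    have h2 : a * cs.simple t * a⁻¹ ∈ par cs I := by
      refine mul_mem (mul_mem ha (Subgroup.subset_closure ⟨t, ht, rfl⟩)) (inv_mem ha)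
    exact h2
  have hconj' : ∀ t ∈ I, w⁻¹ * cs.simple t * w ∈ par cs I := by
    intro t ht
    have h1 : w⁻¹ * cs.simple t * w = a⁻¹ * (g⁻¹ * cs.simple t * g) * a := by
      rw [hwdef]
      group
    rw [h1]
    exact mul_mem (mul_mem (inv_mem ha) (hgnorm' _ (Subgroup.subset_closure ⟨t, ht, rfl⟩))) ha
  -- root of a reflection lying in par is in the span
  have hrootspan : ∀ (x : W), x ∈ par cs I → ∀ γ ∈ G.Phi,
      (∀ v, G.ρ x v = v - (2 * G.form γ v) • γ) → γ ∈ Submodule.span ℝ (G.PiI I) := by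
    intro x hx γ hγ hact
    have h1 := c15_par_sub_mem_span cs G hx γ
    have h4 : γ = (-(1:ℝ)/2) • (G.ρ x γ - γ) := by
      rw [hact γ, G.root_norm hγ]
      module
    rw [h4]
    exact Submodule.smul_mem _ _ h1
  have hspan : ∀ t ∈ I, G.ρ w (G.α t) ∈ Submodule.span ℝ (G.PiI I) := by
    intro t ht
    refine hrootspan _ (hconj t ht) _ (G.rho_mem_Phi (G.alpha_mem_Phi t) w) ?_
    intro v
    rw [G.conj_simple_apply]
  have hspan' : ∀ t ∈ I, G.ρ w⁻¹ (G.α t) ∈ Submodule.span ℝ (G.PiI I) := by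
    intro t ht
    refine hrootspan _ (hconj' t ht) _ (G.rho_mem_Phi (G.alpha_mem_Phi t) w⁻¹) ?_
    intro v
    have h1 := G.conj_simple_apply w⁻¹ t v
    rwa [inv_inv] at h1
  have hpos : ∀ t ∈ I, G.ρ w (G.α t) ∈ G.PhiPos := fun t ht =>
    G.mem_PhiPos_of_ascent (hasc t ht)
  have hpos' : ∀ t ∈ I, G.ρ w⁻¹ (G.α t) ∈ G.PhiPos := by
    intro t ht
    apply G.mem_PhiPos_of_ascent
    have h1 : cs.length w⁻¹ < cs.length ((cs.simple t * w)⁻¹) := by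
      rw [cs.length_inv, cs.length_inv]
      exact hascL t ht
    have h2 : (cs.simple t * w)⁻¹ = w⁻¹ * cs.simple t := by
      rw [mul_inv_rev, cs.inv_simple]
    rwa [h2] at h1
  exact c15_NIset_of_pos_span cs G hpos hspan hpos' hspan'

end Conjuncts2
section Conjuncts3

lemma c15_Ytilde_inv {I : Set B} {y : W} (hy : y ∈ Ytilde cs G I) : y⁻¹ ∈ Ytilde cs G I := by
  refine ⟨c15_NIset_inv cs G hy.1, ?_⟩
  calc (fun v => G.ρ y⁻¹ v) '' (G.perp I ∩ G.PhiPos)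
      = (fun v => G.ρ y⁻¹ v) '' ((fun v => G.ρ y v) '' (G.perp I ∩ G.PhiPos)) := by
        conv_lhs => rw [← hy.2]
    _ = (fun v => G.ρ y⁻¹ (G.ρ y v)) '' (G.perp I ∩ G.PhiPos) := by rw [← Set.image_comp]; rfl
    _ = G.perp I ∩ G.PhiPos := by
        have h2 : ∀ v ∈ G.perp I ∩ G.PhiPos, G.ρ y⁻¹ (G.ρ y v) = v :=
          fun v _ => G.rho_inv_apply y v
        rw [Set.image_congr h2, Set.image_id']

lemma c15_Ytilde_pos {I : Set B} {y : W} (hy : y ∈ Ytilde cs G I) {γ : V}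
    (hγ : γ ∈ G.perp I ∩ G.PhiPos) : G.ρ y γ ∈ G.perp I ∩ G.PhiPos := by
  rw [← hy.2]
  exact ⟨γ, hγ, rfl⟩

lemma c15_orbit_sub_perp {I : Set B} : G.orbit (G.perp I) ⊆ G.perp I := by
  rintro _ ⟨u, hu, a, ha, rfl⟩
  exact G.Wperp_stab_perp hu ha

lemma c15_Ytilde_stab_orbit {I : Set B} {y : W} (hy : y ∈ Ytilde cs G I) {γ : V}
    (hγ : γ ∈ G.orbit (G.perp I)) : G.ρ y γ ∈ G.orbit (G.perp I) := by
  obtain ⟨u, hu, a, ha, rfl⟩ := hγ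
  refine ⟨y * u * y⁻¹, c15_conj_Wperp cs G hy.1 hu, G.ρ y a,
    c15_NIset_stab_perp cs G hy.1 ha, ?_⟩
  rw [G.rho_mul_apply, G.rho_mul_apply, G.rho_inv_apply]

lemma c15_Ytilde_stab_simpleSet {I : Set B} {y : W} (hy : y ∈ Ytilde cs G I) {γ : V}
    (hγ : γ ∈ G.simpleSet (G.perp I)) : G.ρ y γ ∈ G.simpleSet (G.perp I) := by
  obtain ⟨⟨horb, hpos⟩, hind⟩ := hγ
  have hperp : γ ∈ G.perp I ∩ G.PhiPos := ⟨c15_orbit_sub_perp cs G horb, hpos⟩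
  refine ⟨⟨c15_Ytilde_stab_orbit cs G hy horb, (c15_Ytilde_pos cs G hy hperp).2⟩, ?_⟩
  intro n c β hc hβ heq
  have hyinv := c15_Ytilde_inv cs G hy
  have heq' : γ = ∑ k, c k • G.ρ y⁻¹ (β k) := by
    have h1 := congrArg (fun v => G.ρ y⁻¹ v) heq
    rw [G.rho_inv_apply] at h1
    rw [h1, map_sum]
    exact Finset.sum_congr rfl fun k _ => by rw [map_smul]
  have hβ' : ∀ k, G.ρ y⁻¹ (β k) ∈ G.orbit (G.perp I) ∩ G.PhiPos := by
    intro k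
    have hk := hβ k
    have hkperp : β k ∈ G.perp I ∩ G.PhiPos := ⟨c15_orbit_sub_perp cs G hk.1, hk.2⟩
    exact ⟨c15_Ytilde_stab_orbit cs G hyinv hk.1, (c15_Ytilde_pos cs G hyinv hkperp).2⟩
  have hall := hind n c (fun k => G.ρ y⁻¹ (β k)) hc hβ' heq'
  intro k
  have h2 := hall k
  have h3 := congrArg (fun v => G.ρ y v) h2
  rw [G.rho_apply_inv] at h3
  exact h3

lemma c15_RI_conj {I : Set B} {y : W} (hy : y ∈ Ytilde cs G I) :
    (fun r => y * r * y⁻¹) '' G.RI I ⊆ G.RI I := by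
  rintro _ ⟨r, ⟨γ, hγ, rfl⟩, rfl⟩
  have hγPhi : γ ∈ G.Phi := (c15_orbit_sub_perp cs G hγ.1.1).1
  show y * G.reflAlong γ * y⁻¹ ∈ G.RI I
  rw [← G.reflAlong_conj hγPhi y]
  exact ⟨G.ρ y γ, c15_Ytilde_stab_simpleSet cs G hy hγ, rfl⟩

lemma c15_RI_conj_eq {I : Set B} {y : W} (hy : y ∈ Ytilde cs G I) :
    (fun r => y * r * y⁻¹) '' G.RI I = G.RI I := by
  apply Set.Subset.antisymm (c15_RI_conj cs G hy)
  intro r hr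
  have h1 := c15_RI_conj cs G (c15_Ytilde_inv cs G hy) (Set.mem_image_of_mem _ hr)
  refine ⟨y⁻¹ * r * y⁻¹⁻¹, h1, ?_⟩
  show y * (y⁻¹ * r * y⁻¹⁻¹) * y⁻¹ = r
  group

lemma c15_crux {I : Set B} : ∀ u : W, u ∈ G.Wperp I → u ∈ Ytilde cs G I → u = 1 := by
  intro u hu hY
  have hgood := G.perp_good I
  have hu2 : u ∈ Subgroup.closure (G.reflAlong '' G.DeltaSet (G.perp I)) :=
    G.WR_le_closure_Delta hgood hu
  obtain ⟨L, hL, rfl⟩ := G.exists_list_of_mem_closure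
    (fun γ hγ => hgood.1 hγ.1.1) hu2
  refine G.free_trivial hgood L.length L rfl hL ?_
  intro β h1 h2 hneg
  have h3 := c15_Ytilde_pos cs G hY ⟨h1, h2⟩
  exact G.not_pos_and_neg (G.rho_mem_Phi (hgood.1 h1) _) h3.2 hneg

lemma c15_Ytilde_par_Wperp {I : Set B} {a u : W} (ha : a ∈ par cs I) (hu : u ∈ G.Wperp I)
    (hpY : a * u ∈ Ytilde cs G I) : a * u = 1 := by
  have ha1 : a = 1 := by
    apply c15_par_eq_one cs G ha
    intro t ht
    have h1 : G.ρ (a * u) (G.α t) = G.ρ a (G.α t) := by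
      rw [G.rho_mul_apply, G.Wperp_fix hu t ht]
    obtain ⟨i, hi, he⟩ := c15_NIset_apply_mem cs G hpY.1 ht
    rw [← h1, he]
    exact ⟨i, hi, rfl⟩
  rw [ha1, one_mul] at hpY ⊢
  exact c15_crux cs G u hu hpY

end Conjuncts3

/-- Theorem `exactsequence_N`. Let `I ⊆ S`, `N_I = {w : w·Π_I = Π_I}`
and `Ỹ_I = {w ∈ N_I : w·(Φ^{⊥I} ∩ Φ⁺) = Φ^{⊥I} ∩ Φ⁺}`. Then `N_I = W^{⊥I} ⋊ Ỹ_I` and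
`N_W(W_I) = W_I ⋊ (W^{⊥I} ⋊ Ỹ_I) = (W_I × W^{⊥I}) ⋊ Ỹ_I`; in particular `W_I` and `W^{⊥I}`
commute elementwise and intersect trivially, `W_I·W^{⊥I}` is normal in `N_W(W_I)`,
`(W_I·W^{⊥I}) ∩ Ỹ_I = {1}`, and `N_W(W_I) = W_I·W^{⊥I}·Ỹ_I`. Moreover `Ỹ_I` acts on
`W^{⊥I}` by automorphisms of the Coxeter system `(W^{⊥I}, R^I)`. -/
theorem statement_15 (I : Set B) :
    (∀ u : W, u ∈ G.Wperp I → u ∈ NIset cs G I) ∧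
    (∀ w ∈ NIset cs G I, ∀ u ∈ G.Wperp I, w * u * w⁻¹ ∈ G.Wperp I) ∧
    (∀ u : W, u ∈ G.Wperp I → u ∈ Ytilde cs G I → u = 1) ∧
    (∀ w ∈ NIset cs G I, ∃ u ∈ G.Wperp I, ∃ y ∈ Ytilde cs G I, w = u * y) ∧
    (∀ w ∈ NIset cs G I, w ∈ Subgroup.normalizer (par cs I)) ∧
    (∀ a ∈ par cs I, ∀ u ∈ G.Wperp I, a * u = u * a) ∧
    (∀ w : W, w ∈ par cs I → w ∈ G.Wperp I → w = 1) ∧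
    (∀ g ∈ Subgroup.normalizer (par cs I), ∀ p : W,
      (∃ a ∈ par cs I, ∃ u ∈ G.Wperp I, p = a * u) →
      ∃ a ∈ par cs I, ∃ u ∈ G.Wperp I, g * p * g⁻¹ = a * u) ∧
    (∀ p : W, (∃ a ∈ par cs I, ∃ u ∈ G.Wperp I, p = a * u) → p ∈ Ytilde cs G I → p = 1) ∧
    (∀ g ∈ Subgroup.normalizer (par cs I),
      ∃ a ∈ par cs I, ∃ u ∈ G.Wperp I, ∃ y ∈ Ytilde cs G I, g = a * u * y) ∧
    (∀ y ∈ Ytilde cs G I, (fun r => y * r * y⁻¹) '' G.RI I = G.RI I) := by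
  refine ⟨?_, ?_, ?_, ?_, ?_, ?_, ?_, ?_, ?_, ?_, ?_⟩
  · exact fun u hu => c15_Wperp_subset_NIset cs G hu
  · exact fun w hw u hu => c15_conj_Wperp cs G hw hu
  · exact c15_crux cs G
  · exact fun w hw => c15_decomp cs G (cs.length w) w rfl hw
  · exact fun w hw => c15_mem_normalizer cs G hw
  · exact fun a ha u hu => c15_par_comm cs G ha hu
  · exact fun w hw hw2 => c15_par_inter_Wperp cs G hw hw2
  · rintro g hg p ⟨a, ha, u, hu, rfl⟩
    refine ⟨g * a * g⁻¹, (Subgroup.mem_normalizer_iff.1 hg a).1 ha, g * u * g⁻¹, ?_, by group⟩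
    obtain ⟨a₀, ha₀, hna⟩ := c15_normalizer_NIset cs G hg
    have he : g * u * g⁻¹ = (g * a₀) * u * (g * a₀)⁻¹ := by
      have h2 : a₀ * u * a₀⁻¹ = u := by
        rw [c15_par_comm cs G ha₀ hu]
        group
      calc g * u * g⁻¹ = g * (a₀ * u * a₀⁻¹) * g⁻¹ := by rw [h2]
        _ = g * a₀ * u * (g * a₀)⁻¹ := by group
    rw [he]
    exact c15_conj_Wperp cs G hna hu
  · rintro p ⟨a, ha, u, hu, rfl⟩ hp
    exact c15_Ytilde_par_Wperp cs G ha hu hp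
  · intro g hg
    obtain ⟨a₀, ha₀, hna⟩ := c15_normalizer_NIset cs G hg
    obtain ⟨u, hu, y, hy, he⟩ := c15_decomp cs G (cs.length (g * a₀)) (g * a₀) rfl hna
    have ha'mem : y * a₀⁻¹ * y⁻¹ ∈ par cs I := c15_conj_par cs G hy.1 (inv_mem ha₀)
    refine ⟨y * a₀⁻¹ * y⁻¹, ha'mem, u, hu, y, hy, ?_⟩
    have hcomm := c15_par_comm cs G ha'mem hu
    have hg2 : g = u * (y * a₀⁻¹ * y⁻¹) * y := by
      have h1 : g = u * y * a₀⁻¹ := by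
        rw [← he]
        group
      rw [h1]
      group
    rw [hg2, ← hcomm]
  · exact fun y hy => c15_RI_conj_eq cs G hy
end CoxCentralizer
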